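/- arXiv:math/0108091 — 5 statements merged into one kernel-verified Lean document; each statement's English description precedes it below -/
import Mathlib

section
/- Every finitely generated nilpotent group of orientation-preserving homeomorphisms of the real line ℝ preserves a nonzero Borel measure on ℝ that is finite on compact sets. -/
/-!
Plante's argument. Start from `ℝ`, on which the last nontrivial term of the lower central series
`γ₀ = G ⊇ γ₁ ⊇ ⋯` acts trivially, and descend the series. If `γₙ₊₁` acts trivially on a nonempty
closed invariant set `D`, then every element of `γₙ` commutes on `D` with the whole group, and
modulo `γₙ₊₁` the group `γₙ` is generated by finitely many iterated commutators of generators.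
Intersecting `D` with their fixed point sets either gives such a set for `γₙ` (for `γ₀ = G`, a
global fixed point, whose Dirac mass is invariant), or one of them, `h₀`, has no fixed point on a
nonempty closed invariant set `D` on which it is central. Then `h₀` translates `D`: for `x₀ ∈ D`,
the index `a g` of the fundamental domain `[h₀ ^ m • x₀, h₀ ^ (m + 1) • x₀)` containing `g • x₀`
is a quasimorphism, its homogenization `τ` is a homomorphism because `G` is nilpotent, and
`x ↦ sup {τ g | g • x₀ ≤ x}` is monotone and shifted by `τ g` under `g`, so its Stieltjes measure
is invariant.
-/

open MeasureTheory Set Filter Topology Function Subgroup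
open scoped commutatorElement

section LowerCentralSeries

variable {G : Type*} [Group G]

lemma commute_of_mem_lowerCentralSeries {k : ℕ}
    (hk : (⊤ : Subgroup G).lowerCentralSeries (k + 1) = ⊥) {z : G}
    (hz : z ∈ (⊤ : Subgroup G).lowerCentralSeries k) (g : G) : Commute z g := by
  rw [← commutatorElement_eq_one_iff_commute, ← Subgroup.mem_bot, ← hk]
  exact commutator_mem_commutator hz (mem_top g)

def leftNormedCommutators (S : Set G) : ℕ → Set G
  | 0 => S
  | k + 1 => image2 (fun a b => ⁅a, b⁆) (leftNormedCommutators S k) S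

lemma Set.Finite.leftNormedCommutators {S : Set G} (hS : S.Finite) (k : ℕ) :
    (leftNormedCommutators S k).Finite := by
  induction k with
  | zero => exact hS
  | succ k ih => exact ih.image2 _ hS

lemma leftNormedCommutators_subset_lowerCentralSeries (S : Set G) (k : ℕ) :
    leftNormedCommutators S k ⊆ (⊤ : Subgroup G).lowerCentralSeries k := by
  induction k with
  | zero => exact fun x _ => mem_top x
  | succ k ih =>
    rintro _ ⟨a, ha, b, -, rfl⟩
    exact commutator_mem_commutator (ih ha) (mem_top b)

lemma commutatorElement_mem_iff_commute {M : Subgroup G} [M.Normal] {x y : G} :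
    ⁅x, y⁆ ∈ M ↔ Commute (x : G ⧸ M) y := by
  rw [← QuotientGroup.eq_one_iff, ← QuotientGroup.mk'_apply, map_commutatorElement,
    commutatorElement_eq_one_iff_commute]
  rfl

lemma normal_of_lowerCentralSeries_le {k : ℕ} {M : Subgroup G}
    (h₁ : (⊤ : Subgroup G).lowerCentralSeries (k + 1) ≤ M)
    (h₂ : M ≤ (⊤ : Subgroup G).lowerCentralSeries k) : M.Normal := by
  refine ⟨fun n hn g => ?_⟩
  have hc : ⁅g, n⁆ ∈ (⊤ : Subgroup G).lowerCentralSeries (k + 1) := by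
    rw [Subgroup.lowerCentralSeries_succ, commutator_comm]
    exact commutator_mem_commutator (mem_top g) (h₂ hn)
  simpa [commutatorElement_def, mul_assoc] using M.mul_mem (h₁ hc) hn

lemma lowerCentralSeries_le_closure_leftNormedCommutators_sup {S : Set G} (hS : closure S = ⊤)
    (k : ℕ) : (⊤ : Subgroup G).lowerCentralSeries k ≤
      closure (leftNormedCommutators S k) ⊔ (⊤ : Subgroup G).lowerCentralSeries (k + 1) := by
  induction k with
  | zero => exact hS ▸ le_sup_left
  | succ k ih =>
    set M :=
      closure (leftNormedCommutators S (k + 1)) ⊔ (⊤ : Subgroup G).lowerCentralSeries (k + 2)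
    have : M.Normal := normal_of_lowerCentralSeries_le le_sup_right <| sup_le
      (closure_le _ |>.mpr (leftNormedCommutators_subset_lowerCentralSeries S (k + 1)))
      (Subgroup.lowerCentralSeries_antitone _ (k + 1).le_succ)
    -- modulo `M`, the commutators of length `k + 1` commute with the generators, hence are central
    have hcentral : ∀ x ∈ leftNormedCommutators S k, ∀ y, ⁅x, y⁆ ∈ M := by
      intro x hx y
      have : closure S ≤ (Subgroup.centralizer {(x : G ⧸ M)}).comap (QuotientGroup.mk' M) := by
        refine closure_le _ |>.mpr fun s hs => ?_
        have hxs : ⁅x, s⁆ ∈ M := mem_sup_left (subset_closure ⟨x, hx, s, hs, rfl⟩)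
        exact mem_centralizer_singleton_iff.mpr (commutatorElement_mem_iff_commute.mp hxs).eq.symm
      have hy := this (hS ▸ mem_top y)
      exact commutatorElement_mem_iff_commute.mpr (mem_centralizer_singleton_iff.mp hy).symm
    have : (⊤ : Subgroup G).lowerCentralSeries k ≤ M.upperCentralSeriesStep :=
      ih.trans <| sup_le (closure_le _ |>.mpr hcentral) fun a ha b =>
        mem_sup_right (commutator_mem_commutator ha (mem_top b))
    exact commutator_le.mpr fun a ha b _ => this ha b

lemma smul_smul_comm_of_lowerCentralSeries_le {α : Type*} [MulAction G α] {n : ℕ} {D : Set α}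
    (hD : (⊤ : Subgroup G).lowerCentralSeries (n + 1) ≤ fixingSubgroup G D) {h : G}
    (hh : h ∈ (⊤ : Subgroup G).lowerCentralSeries n) (g : G) {x : α} (hx : x ∈ D) :
    h • g • x = g • h • x := by
  have hc : ⁅h⁻¹, g⁻¹⁆ ∈ (⊤ : Subgroup G).lowerCentralSeries (n + 1) :=
    commutator_mem_commutator (inv_mem hh) (mem_top _)
  rw [smul_smul, smul_smul, show h * g = g * h * ⁅h⁻¹, g⁻¹⁆ by rw [commutatorElement_def]; group,
    mul_smul, (mem_fixingSubgroup_iff G).mp (hD hc) x hx]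

end LowerCentralSeries

lemma eq_zero_of_forall_abs_nat_mul_le {a C : ℝ} (h : ∀ n : ℕ, |n * a| ≤ C) : a = 0 := by
  by_contra ha
  obtain ⟨n, hn⟩ := exists_nat_gt (C / |a|)
  have hn' := h n
  rw [abs_mul, Nat.abs_cast] at hn'
  linarith [(div_lt_iff₀ (abs_pos.mpr ha)).mp hn]

section Quasimorphism

variable {G : Type*} [Group G]

structure IsHomogeneousQuasimorphism (φ : G → ℝ) : Prop where
  bddDefect : ∃ C, ∀ x y, |φ (x * y) - φ x - φ y| ≤ C
  map_pow : ∀ x (n : ℕ), φ (x ^ n) = n * φ x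

namespace IsHomogeneousQuasimorphism

variable {φ : G → ℝ}

lemma map_one (hφ : IsHomogeneousQuasimorphism φ) : φ 1 = 0 := by
  simpa using hφ.map_pow 1 0

lemma map_mul_of_commute (hφ : IsHomogeneousQuasimorphism φ) {x y : G} (hxy : Commute x y) :
    φ (x * y) = φ x + φ y := by
  obtain ⟨C, hC⟩ := hφ.bddDefect
  have key := eq_zero_of_forall_abs_nat_mul_le (a := φ (x * y) - φ x - φ y) (C := C) fun n => by
    have := hC (x ^ n) (y ^ n)
    rwa [← hxy.mul_pow, hφ.map_pow, hφ.map_pow, hφ.map_pow, ← mul_sub, ← mul_sub] at this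
  linarith

lemma map_inv (hφ : IsHomogeneousQuasimorphism φ) (x : G) : φ x⁻¹ = -φ x := by
  have := hφ.map_mul_of_commute (Commute.inv_right (Commute.refl x))
  rw [mul_inv_cancel, hφ.map_one] at this
  linarith

lemma map_conj (hφ : IsHomogeneousQuasimorphism φ) (x y : G) : φ (y * x * y⁻¹) = φ x := by
  obtain ⟨C, hC⟩ := hφ.bddDefect
  have key := eq_zero_of_forall_abs_nat_mul_le (a := φ (y * x * y⁻¹) - φ x) (C := C + C)
    fun n => by
      have h₁ := hC y (x ^ n * y⁻¹)
      have h₂ := hC (x ^ n) y⁻¹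
      rw [← mul_assoc, ← conj_pow, hφ.map_pow] at h₁
      rw [hφ.map_pow, hφ.map_inv] at h₂
      calc |n * (φ (y * x * y⁻¹) - φ x)|
          = |(n * φ (y * x * y⁻¹) - φ y - φ (x ^ n * y⁻¹)) +
              (φ (x ^ n * y⁻¹) - n * φ x - -φ y)| := by ring_nf
        _ ≤ C + C := (abs_add_le _ _).trans (add_le_add h₁ h₂)
  linarith

lemma map_commutatorElement_of_commute (hφ : IsHomogeneousQuasimorphism φ) {a b : G}
    (hc : Commute ⁅a, b⁆ b) : φ ⁅a, b⁆ = 0 := by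
  obtain ⟨C, hC⟩ := hφ.bddDefect
  refine eq_zero_of_forall_abs_nat_mul_le (C := C) fun n => ?_
  have hpow : ⁅a, b⁆ ^ n * b ^ n = a * b ^ n * a⁻¹ := by
    rw [← hc.mul_pow, ← conj_pow, commutatorElement_def]; group
  have := hC (a * b ^ n * a⁻¹) (b ^ n)⁻¹
  rwa [← hpow, mul_inv_cancel_right, hφ.map_pow, hpow, hφ.map_conj, hφ.map_inv, sub_neg_eq_add,
    sub_add_cancel] at this

lemma exists_quotient (hφ : IsHomogeneousQuasimorphism φ) {N : Subgroup G} [N.Normal]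
    (hN : ∀ g, ∀ z ∈ N, φ (g * z) = φ g) :
    ∃ ψ : G ⧸ N → ℝ, IsHomogeneousQuasimorphism ψ ∧ ∀ g : G, ψ g = φ g := by
  refine ⟨Quotient.lift φ fun a b hab => ?_, ⟨?_, ?_⟩, fun g => rfl⟩
  · rw [← hN a _ (QuotientGroup.leftRel_apply.mp hab), mul_inv_cancel_left]
  · obtain ⟨C, hC⟩ := hφ.bddDefect
    exact ⟨C, fun q r => QuotientGroup.induction_on q fun x =>
      QuotientGroup.induction_on r fun y => hC x y⟩
  · exact fun q n => QuotientGroup.induction_on q fun x => hφ.map_pow x n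

lemma map_mul_of_lowerCentralSeries_eq_bot (n : ℕ)
    (hφ : IsHomogeneousQuasimorphism φ) (hn : (⊤ : Subgroup G).lowerCentralSeries (n + 1) = ⊥)
    (x y : G) : φ (x * y) = φ x + φ y := by
  induction n generalizing G with
  | zero => exact hφ.map_mul_of_commute (commute_of_mem_lowerCentralSeries hn (mem_top x) y)
  | succ n ih =>
    set N := (⊤ : Subgroup G).lowerCentralSeries (n + 1)
    have hcentral : ∀ z ∈ N, ∀ g, Commute z g := fun z hz =>
      commute_of_mem_lowerCentralSeries hn hz
    have hvanish : ∀ z ∈ N, φ z = 0 := by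
      intro z hz
      induction hz using Subgroup.closure_induction with
      | mem _ hw =>
        obtain ⟨p, hp, q, -, rfl⟩ := hw
        exact hφ.map_commutatorElement_of_commute
          (hcentral _ (commutator_mem_commutator hp (mem_top q)) q)
      | one => exact hφ.map_one
      | mul w₁ w₂ hw₁ _ h₁ h₂ => rw [hφ.map_mul_of_commute (hcentral w₁ hw₁ w₂), h₁, h₂, add_zero]
      | inv w _ hw => rw [hφ.map_inv, hw, neg_zero]
    obtain ⟨ψ, hψ, hψφ⟩ := hφ.exists_quotient (N := N) fun g z hz => by
      rw [hφ.map_mul_of_commute (hcentral z hz g).symm, hvanish z hz, add_zero]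
    have hQ : (⊤ : Subgroup (G ⧸ N)).lowerCentralSeries (n + 1) = ⊥ := by
      rw [← map_top_of_surjective _ (QuotientGroup.mk'_surjective N), ← map_lowerCentralSeries,
        Subgroup.map_eq_bot_iff, QuotientGroup.ker_mk']
    have := ih hψ hQ x y
    rwa [← QuotientGroup.mk_mul, hψφ, hψφ, hψφ] at this

lemma map_mul [Group.IsNilpotent G]
    (hφ : IsHomogeneousQuasimorphism φ) (x y : G) : φ (x * y) = φ x + φ y := by
  obtain ⟨n, hn⟩ := Subgroup.nilpotent_iff_lowerCentralSeries.mp ‹Group.IsNilpotent G›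
  refine hφ.map_mul_of_lowerCentralSeries_eq_bot n ?_ x y
  exact eq_bot_iff.mpr (hn ▸ Subgroup.lowerCentralSeries_antitone _ n.le_succ)

end IsHomogeneousQuasimorphism

end Quasimorphism

section Homogenization

variable {G : Type*} [Group G] {φ : G → ℝ} {C : ℝ}

noncomputable def homogenization (φ : G → ℝ) (g : G) : ℝ :=
  limUnder atTop fun n : ℕ => φ (g ^ n) / n

lemma abs_map_pow_succ_sub_le (hφ : ∀ x y, |φ (x * y) - φ x - φ y| ≤ C) (g : G) (n : ℕ) :
    |φ (g ^ (n + 1)) - (n + 1) * φ g| ≤ n * C := by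
  induction n with
  | zero => simp
  | succ n ih =>
    calc |φ (g ^ (n + 1 + 1)) - (↑(n + 1) + 1) * φ g|
        = |(φ (g ^ (n + 1) * g) - φ (g ^ (n + 1)) - φ g) + (φ (g ^ (n + 1)) - (n + 1) * φ g)| := by
          rw [pow_succ]; push_cast; ring_nf
      _ ≤ C + n * C := (abs_add_le _ _).trans (add_le_add (hφ _ _) ih)
      _ = ↑(n + 1) * C := by push_cast; ring

lemma tendsto_homogenization (hφ : ∀ x y, |φ (x * y) - φ x - φ y| ≤ C) (g : G) :
    Tendsto (fun n : ℕ => φ (g ^ n) / n) atTop (𝓝 (homogenization φ g)) := by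
  -- Fekete's lemma, applied to the subadditive sequence `φ (g ^ n) + C`
  have hsub : Subadditive fun n => φ (g ^ n) + C := fun m n => by
    have := (abs_le.mp (hφ (g ^ m) (g ^ n))).2
    rw [← pow_add] at this
    linarith
  have hbdd : BddBelow (range fun n : ℕ => (φ (g ^ n) + C) / n) := by
    refine ⟨min 0 (φ g - C), ?_⟩
    rintro _ ⟨_ | n, rfl⟩
    · simp
    · have := (abs_le.mp (abs_map_pow_succ_sub_le hφ g n)).1
      refine (min_le_right _ _).trans ((le_div_iff₀ (by positivity)).mpr ?_)
      push_cast
      nlinarith [(abs_nonneg _).trans (hφ 1 1)]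
  have := (hsub.tendsto_lim hbdd).sub (tendsto_const_div_atTop_nhds_zero_nat C)
  simp only [add_div, add_sub_cancel_right, sub_zero] at this
  rwa [homogenization, this.limUnder_eq]

lemma abs_homogenization_sub_le (hφ : ∀ x y, |φ (x * y) - φ x - φ y| ≤ C) (g : G) :
    |homogenization φ g - φ g| ≤ C := by
  have hlim := ((tendsto_add_atTop_iff_nat 1).mpr (tendsto_homogenization hφ g)).sub_const (φ g)
  refine le_of_tendsto' hlim.abs fun n => ?_
  have hn : (0 : ℝ) < n + 1 := by positivity
  rw [Nat.cast_add_one, div_sub' hn.ne', abs_div, abs_of_pos hn, div_le_iff₀ hn]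
  nlinarith [abs_map_pow_succ_sub_le hφ g n, (abs_nonneg _).trans (hφ 1 1)]

lemma homogenization_pow (hφ : ∀ x y, |φ (x * y) - φ x - φ y| ≤ C) (g : G) (m : ℕ) :
    homogenization φ (g ^ m) = m * homogenization φ g := by
  rcases m.eq_zero_or_pos with rfl | hm
  · simpa [homogenization] using (tendsto_const_div_atTop_nhds_zero_nat (φ 1)).limUnder_eq
  refine tendsto_nhds_unique (tendsto_homogenization hφ (g ^ m)) ?_
  have := ((tendsto_homogenization hφ g).comp (tendsto_id.const_mul_atTop' hm)).const_mul (m : ℝ)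
  refine this.congr fun k => ?_
  simp only [comp_apply, id_eq, ← pow_mul, Nat.cast_mul]
  rw [← mul_div_assoc, mul_div_mul_left _ _ (by positivity)]

lemma isHomogeneousQuasimorphism_homogenization (hφ : ∀ x y, |φ (x * y) - φ x - φ y| ≤ C) :
    IsHomogeneousQuasimorphism (homogenization φ) := by
  refine ⟨⟨4 * C, fun x y => ?_⟩, homogenization_pow hφ⟩
  have h₁ := abs_le.mp (abs_homogenization_sub_le hφ (x * y))
  have h₂ := abs_le.mp (abs_homogenization_sub_le hφ x)
  have h₃ := abs_le.mp (abs_homogenization_sub_le hφ y)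
  have h₄ := abs_le.mp (hφ x y)
  exact abs_le.mpr ⟨by linarith, by linarith⟩

end Homogenization

section Iterates

variable {α : Type*} [ConditionallyCompleteLinearOrder α] [TopologicalSpace α] [OrderTopology α]
  {f : α → α} {D : Set α}

lemma exists_mem_isFixedPt_of_monotone_iterate (hf : Continuous f) (hD : IsClosed D)
    (hfD : MapsTo f D D) {x : α} (hx : x ∈ D) (hmono : Monotone fun n => f^[n] x)
    (hbdd : BddAbove (range fun n => f^[n] x)) : ∃ z ∈ D, IsFixedPt f z :=
  have hlim := tendsto_atTop_ciSup hmono hbdd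
  ⟨_, hD.mem_of_tendsto hlim (.of_forall fun n => hfD.iterate n hx),
    isFixedPt_of_tendsto_iterate hlim hf.continuousAt⟩

lemma exists_lt_iterate_of_forall_lt (hf : Continuous f) (hD : IsClosed D) (hfD : MapsTo f D D)
    (hlt : ∀ x ∈ D, x < f x) {x : α} (hx : x ∈ D) (y : α) : ∃ n, y < f^[n] x := by
  by_contra! hle
  have hmono : Monotone fun n => f^[n] x := monotone_nat_of_le_succ fun n => by
    rw [iterate_succ_apply']
    exact (hlt _ (hfD.iterate n hx)).le
  obtain ⟨z, hz, hfz⟩ :=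
    exists_mem_isFixedPt_of_monotone_iterate hf hD hfD hx hmono ⟨y, forall_mem_range.mpr hle⟩
  exact (hlt z hz).ne hfz.symm

lemma exists_iterate_lt_of_forall_lt (hf : Continuous f) (hD : IsClosed D) (hfD : MapsTo f D D)
    (hlt : ∀ x ∈ D, f x < x) {x : α} (hx : x ∈ D) (y : α) : ∃ n, f^[n] x < y :=
  exists_lt_iterate_of_forall_lt (α := αᵒᵈ) hf hD hfD hlt hx y

end Iterates

def HasInvariantRadonMeasure (G X : Type*) [SMul G X] [MeasurableSpace X] [TopologicalSpace X] :
    Prop :=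
  ∃ μ : Measure X, μ ≠ 0 ∧ IsFiniteMeasureOnCompacts μ ∧ SMulInvariantMeasure G X μ

structure IsClosedInvariant (G : Type*) {X : Type*} [SMul G X] [TopologicalSpace X] (D : Set X) :
    Prop where
  isClosed : IsClosed D
  smul_mem : ∀ (g : G) {x : X}, x ∈ D → g • x ∈ D

section ClosedInvariant

variable {G X : Type*} [Group G] [MulAction G X] [TopologicalSpace X]

lemma IsClosedInvariant.inter_fixedBy [T2Space X] [ContinuousConstSMul G X] {D : Set X}
    (hD : IsClosedInvariant G D) {h : G} (hcomm : ∀ g : G, ∀ x ∈ D, h • g • x = g • h • x) :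
    IsClosedInvariant G (D ∩ MulAction.fixedBy X h) where
  isClosed := hD.isClosed.inter (isClosed_eq (continuous_const_smul h) continuous_id)
  smul_mem g x hx := ⟨hD.smul_mem g hx.1, (hcomm g x hx.1).trans (congrArg (g • ·) hx.2)⟩

lemma zpow_smul_smul_comm {D : Set X} (hD : IsClosedInvariant G D) {h g : G}
    (hcomm : ∀ x ∈ D, h • g • x = g • h • x) (m : ℤ) {x : X} (hx : x ∈ D) :
    h ^ m • g • x = g • h ^ m • x := by
  induction m using Int.induction_on generalizing x with
  | zero => simp
  | succ i ih => rw [zpow_add_one, mul_smul, mul_smul, hcomm x hx, ih (hD.smul_mem h hx)]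
  | pred i ih =>
    have hinv : g • h⁻¹ • x = h⁻¹ • g • x := eq_inv_smul_iff.mpr <| by
      rw [hcomm _ (hD.smul_mem _ hx), smul_inv_smul]
    rw [zpow_sub_one, mul_smul, mul_smul, ← hinv, ih (hD.smul_mem _ hx)]

end ClosedInvariant

section OrderPreservingAction

variable {G : Type*} [Group G] [MulAction G ℝ] [CovariantClass G ℝ HSMul.hSMul LE.le]

def smulOrderIso (g : G) : ℝ ≃o ℝ :=
  (MulAction.toPerm g).toOrderIso (smul_mono_right g) (smul_mono_right g⁻¹)

@[simp]
lemma smulOrderIso_apply (g : G) (x : ℝ) : smulOrderIso g x = g • x := rfl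

instance : ContinuousConstSMul G ℝ :=
  ⟨fun g => (smulOrderIso g).continuous⟩

lemma hasInvariantRadonMeasure_of_smul_eq {p : ℝ} (hp : ∀ g : G, g • p = p) :
    HasInvariantRadonMeasure G ℝ := by
  refine ⟨.dirac p, NeZero.ne _, inferInstance, ⟨fun g A hA => ?_⟩⟩
  rw [← Measure.map_apply (measurable_const_smul g) hA, Measure.map_dirac, hp]

lemma exists_smul_eq_of_lt_smul_of_smul_lt {D : Set ℝ} (hD : IsClosedInvariant G D) {g : G}
    {x y : ℝ} (hx : x ∈ D) (hxy : x < y) (hgx : x < g • x) (hgy : g • y < y) :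
    ∃ z ∈ D, g • z = z := by
  -- the `g`-orbit of `x` increases but stays below `y`, so it converges to a fixed point
  refine exists_mem_isFixedPt_of_monotone_iterate (continuous_const_smul g) hD.isClosed
    (fun _ => hD.smul_mem g) hx ((smul_mono_right g).monotone_iterate_of_le_map hgx.le)
    ⟨y, forall_mem_range.mpr fun n => ?_⟩
  induction n with
  | zero => exact hxy.le
  | succ n ih =>
    rw [iterate_succ_apply']
    exact (smul_le_smul_left g ih).trans hgy.le

lemma forall_lt_smul_or_forall_smul_lt {D : Set ℝ} (hD : IsClosedInvariant G D) {h : G}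
    (hfree : ∀ x ∈ D, h • x ≠ x) : (∀ x ∈ D, x < h • x) ∨ ∀ x ∈ D, h • x < x := by
  by_contra! ⟨⟨y, hy, hhy⟩, x, hx, hhx⟩
  replace hhy := hhy.lt_of_ne (hfree y hy)
  replace hhx := hhx.lt_of_ne (hfree x hx).symm
  rcases lt_trichotomy x y with hxy | rfl | hyx
  · obtain ⟨z, hz, hhz⟩ := exists_smul_eq_of_lt_smul_of_smul_lt hD hx hxy hhx hhy
    exact hfree z hz hhz
  · exact (hhx.trans hhy).false
  · obtain ⟨z, hz, hhz⟩ := exists_smul_eq_of_lt_smul_of_smul_lt (g := h⁻¹) hD hy hyx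
      ((smulOrderIso h).lt_symm_apply.mpr hhy) ((smulOrderIso h).symm_apply_lt.mpr hhx)
    exact hfree z hz (inv_smul_eq_iff.mp hhz).symm

end OrderPreservingAction

section TranslationNumber

variable {G : Type*} [Group G] [MulAction G ℝ]

structure IsUnboundedOrbit (h₀ : G) (x₀ : ℝ) : Prop where
  strictMono : StrictMono fun m : ℤ => h₀ ^ m • x₀
  exists_lt : ∀ y, ∃ m : ℤ, y < h₀ ^ m • x₀
  exists_gt : ∀ y, ∃ m : ℤ, h₀ ^ m • x₀ < y

lemma IsUnboundedOrbit.of_forall_lt_smul [CovariantClass G ℝ HSMul.hSMul LE.le] {D : Set ℝ}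
    (hD : IsClosedInvariant G D) {h₀ : G} (hlt : ∀ x ∈ D, x < h₀ • x) {x₀ : ℝ} (hx₀ : x₀ ∈ D) :
    IsUnboundedOrbit h₀ x₀ where
  strictMono := strictMono_int_of_lt_succ fun m => by
    rw [add_comm, zpow_add, zpow_one, mul_smul]
    exact hlt _ (hD.smul_mem _ hx₀)
  exists_lt y := by
    obtain ⟨n, hn⟩ := exists_lt_iterate_of_forall_lt (continuous_const_smul h₀) hD.isClosed
      (fun _ => hD.smul_mem h₀) hlt hx₀ y
    exact ⟨n, by rw [zpow_natCast]; rwa [smul_iterate] at hn⟩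
  exists_gt y := by
    obtain ⟨n, hn⟩ := exists_iterate_lt_of_forall_lt (continuous_const_smul h₀⁻¹) hD.isClosed
      (fun _ => hD.smul_mem h₀⁻¹) (fun x hx => (smulOrderIso h₀).symm_apply_lt.mpr (hlt x hx))
      hx₀ y
    exact ⟨-n, by rw [zpow_neg, zpow_natCast, ← inv_pow]; rwa [smul_iterate] at hn⟩

noncomputable def orbitIndex (h₀ : G) (x₀ x : ℝ) : ℤ :=
  sSup {m : ℤ | h₀ ^ m • x₀ ≤ x}

namespace IsUnboundedOrbit

variable {h₀ : G} {x₀ : ℝ}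

lemma bddAbove (ho : IsUnboundedOrbit h₀ x₀) (x : ℝ) : BddAbove {m : ℤ | h₀ ^ m • x₀ ≤ x} := by
  obtain ⟨M, hM⟩ := ho.exists_lt x
  exact ⟨M, fun m hm => (ho.strictMono.lt_iff_lt.mp (hm.trans_lt hM)).le⟩

lemma zpow_smul_orbitIndex_le (ho : IsUnboundedOrbit h₀ x₀) (x : ℝ) :
    h₀ ^ orbitIndex h₀ x₀ x • x₀ ≤ x :=
  Int.csSup_mem ((ho.exists_gt x).imp fun _ => le_of_lt) (ho.bddAbove x)

lemma le_orbitIndex (ho : IsUnboundedOrbit h₀ x₀) {m : ℤ} {x : ℝ} (h : h₀ ^ m • x₀ ≤ x) :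
    m ≤ orbitIndex h₀ x₀ x :=
  le_csSup (ho.bddAbove x) h

lemma lt_zpow_smul_orbitIndex_add_one (ho : IsUnboundedOrbit h₀ x₀) (x : ℝ) :
    x < h₀ ^ (orbitIndex h₀ x₀ x + 1) • x₀ :=
  not_le.mp fun h => (ho.le_orbitIndex h).not_gt (lt_add_one _)

lemma orbitIndex_mono (ho : IsUnboundedOrbit h₀ x₀) : Monotone (orbitIndex h₀ x₀) :=
  fun x _ hxy => ho.le_orbitIndex ((ho.zpow_smul_orbitIndex_le x).trans hxy)

lemma orbitIndex_self (ho : IsUnboundedOrbit h₀ x₀) : orbitIndex h₀ x₀ x₀ = 0 := by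
  refine le_antisymm (ho.strictMono.le_iff_le.mp ?_) (ho.le_orbitIndex (by simp))
  simpa using ho.zpow_smul_orbitIndex_le x₀

variable [CovariantClass G ℝ HSMul.hSMul LE.le]

lemma orbitIndex_zpow_smul (ho : IsUnboundedOrbit h₀ x₀) (k : ℤ) (x : ℝ) :
    orbitIndex h₀ x₀ (h₀ ^ k • x) = k + orbitIndex h₀ x₀ x := by
  refine le_antisymm ?_ (ho.le_orbitIndex ?_)
  · have := smul_le_smul_left (h₀ ^ (-k)) (ho.zpow_smul_orbitIndex_le (h₀ ^ k • x))
    rw [smul_smul, smul_smul, ← zpow_add, ← zpow_add, neg_add_cancel, zpow_zero, one_smul] at this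
    linarith [ho.le_orbitIndex this]
  · rw [zpow_add, mul_smul]
    exact smul_le_smul_left _ (ho.zpow_smul_orbitIndex_le x)

lemma abs_orbitIndex_mul_sub_le (ho : IsUnboundedOrbit h₀ x₀)
    (hcomm : ∀ (g : G) (m : ℤ), h₀ ^ m • g • x₀ = g • h₀ ^ m • x₀) (g h : G) :
    |(orbitIndex h₀ x₀ ((g * h) • x₀) : ℝ) - orbitIndex h₀ x₀ (g • x₀) - orbitIndex h₀ x₀ (h • x₀)|
      ≤ 1 := by
  have hshift (m : ℤ) : orbitIndex h₀ x₀ (g • h₀ ^ m • x₀) = m + orbitIndex h₀ x₀ (g • x₀) := by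
    rw [← hcomm, ho.orbitIndex_zpow_smul]
  have lower := ho.orbitIndex_mono (smul_le_smul_left g (ho.zpow_smul_orbitIndex_le (h • x₀)))
  have upper := ho.orbitIndex_mono
    (smul_le_smul_left g (ho.lt_zpow_smul_orbitIndex_add_one (h • x₀)).le)
  rw [hshift, ← mul_smul] at lower upper
  exact_mod_cast abs_le.mpr ⟨by omega, by omega⟩

end IsUnboundedOrbit

noncomputable def translationNumber (h₀ : G) (x₀ : ℝ) : G → ℝ :=
  homogenization fun g => (orbitIndex h₀ x₀ (g • x₀) : ℝ)

namespace IsUnboundedOrbit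

variable [CovariantClass G ℝ HSMul.hSMul LE.le] {h₀ : G} {x₀ : ℝ}

lemma translationNumber_mul [Group.IsNilpotent G] (ho : IsUnboundedOrbit h₀ x₀)
    (hcomm : ∀ (g : G) (m : ℤ), h₀ ^ m • g • x₀ = g • h₀ ^ m • x₀) (g h : G) :
    translationNumber h₀ x₀ (g * h) = translationNumber h₀ x₀ g + translationNumber h₀ x₀ h :=
  (isHomogeneousQuasimorphism_homogenization (ho.abs_orbitIndex_mul_sub_le hcomm)).map_mul g h

lemma translationNumber_le (ho : IsUnboundedOrbit h₀ x₀)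
    (hcomm : ∀ (g : G) (m : ℤ), h₀ ^ m • g • x₀ = g • h₀ ^ m • x₀) (g : G) :
    translationNumber h₀ x₀ g ≤ orbitIndex h₀ x₀ (g • x₀) + 1 := by
  have := abs_homogenization_sub_le (φ := fun g => (orbitIndex h₀ x₀ (g • x₀) : ℝ))
    (ho.abs_orbitIndex_mul_sub_le hcomm) g
  unfold translationNumber
  linarith [(abs_le.mp this).2]

lemma translationNumber_self (ho : IsUnboundedOrbit h₀ x₀)
    (hcomm : ∀ (g : G) (m : ℤ), h₀ ^ m • g • x₀ = g • h₀ ^ m • x₀) :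
    translationNumber h₀ x₀ h₀ = 1 := by
  have hqm := ho.abs_orbitIndex_mul_sub_le hcomm
  refine sub_eq_zero.mp (eq_zero_of_forall_abs_nat_mul_le (C := 1) fun n => ?_)
  have := abs_homogenization_sub_le (φ := fun g => (orbitIndex h₀ x₀ (g • x₀) : ℝ)) hqm (h₀ ^ n)
  rwa [homogenization_pow (φ := fun g => (orbitIndex h₀ x₀ (g • x₀) : ℝ)) hqm, ← zpow_natCast,
    ho.orbitIndex_zpow_smul, ho.orbitIndex_self, add_zero, Int.cast_natCast, ← mul_sub_one] at this

end IsUnboundedOrbit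

end TranslationNumber

section InvariantMeasure

variable {G : Type*} [Group G] [MulAction G ℝ]

lemma Monotone.rightLim_apply_orderIso {F : ℝ → ℝ} (hF : Monotone F) (e : ℝ ≃o ℝ) {c : ℝ}
    (hc : ∀ x, F (e x) = c + F x) (x : ℝ) : rightLim F (e x) = c + rightLim F x := by
  have he : Tendsto e.symm (𝓝[>] (e x)) (𝓝[>] x) := by
    have := e.symm.continuous.continuousWithinAt.tendsto_nhdsWithin (x := e x) (s := Ioi (e x))
      (t := Ioi x) fun y hy => e.lt_symm_apply.mpr hy
    rwa [e.symm_apply_apply] at this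
  refine rightLim_eq_of_tendsto ((((hF.tendsto_rightLim x).const_add c).comp he).congr fun y => ?_)
  rw [comp_apply, ← hc, e.apply_symm_apply]

noncomputable def orbitCoordinate (τ : G → ℝ) (x₀ x : ℝ) : ℝ :=
  sSup (τ '' {g | g • x₀ ≤ x})

variable {τ : G → ℝ} {x₀ : ℝ}

lemma orbitCoordinate_mono (hne : ∀ x, (τ '' {g : G | g • x₀ ≤ x}).Nonempty)
    (hbdd : ∀ x, BddAbove (τ '' {g : G | g • x₀ ≤ x})) : Monotone (orbitCoordinate τ x₀) :=
  fun x y hxy => csSup_le_csSup (hbdd y) (hne x) (image_mono fun _ hg => le_trans hg hxy)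

variable [CovariantClass G ℝ HSMul.hSMul LE.le]

lemma orbitCoordinate_smul (hτ : ∀ g h, τ (g * h) = τ g + τ h)
    (hne : ∀ x, (τ '' {g : G | g • x₀ ≤ x}).Nonempty)
    (hbdd : ∀ x, BddAbove (τ '' {g : G | g • x₀ ≤ x})) (f : G) (x : ℝ) :
    orbitCoordinate τ x₀ (f • x) = τ f + orbitCoordinate τ x₀ x := by
  have : {g : G | g • x₀ ≤ f • x} = (f * ·) '' {g : G | g • x₀ ≤ x} := by
    ext g
    simp only [image_mul_left, mem_preimage, mem_ofPred_eq, mul_smul]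
    exact (smulOrderIso f).symm_apply_le.symm
  rw [orbitCoordinate, orbitCoordinate, this, image_image]
  simp only [hτ]
  rw [← image_image (τ f + ·)]
  exact ((OrderIso.addLeft (τ f)).map_csSup' (hne x) (hbdd x)).symm

theorem hasInvariantRadonMeasure_of_monotone {F : ℝ → ℝ} (hF : Monotone F)
    (hFG : ∀ g : G, ∃ c, ∀ x, F (g • x) = c + F x) {a b : ℝ} (hab : F a < F b) :
    HasInvariantRadonMeasure G ℝ := by
  set ψ := hF.stieltjesFunction
  have hmap (g : G) : ψ.measure.map (g • ·) = ψ.measure := by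
    obtain ⟨c, hc⟩ := hFG g
    refine (Measure.ext_of_Ioc _ _ fun x y _ => ?_).symm
    rw [Measure.map_apply (measurable_const_smul g) measurableSet_Ioc,
      show (g • ·) ⁻¹' Ioc x y = Ioc (g⁻¹ • x) (g⁻¹ • y) from (smulOrderIso g).preimage_Ioc x y,
      ψ.measure_Ioc, ψ.measure_Ioc]
    have hx := hF.rightLim_apply_orderIso (smulOrderIso g) hc (g⁻¹ • x)
    have hy := hF.rightLim_apply_orderIso (smulOrderIso g) hc (g⁻¹ • y)
    rw [smulOrderIso_apply, smul_inv_smul] at hx hy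
    simp only [ψ, hF.stieltjesFunction_eq, hx, hy, add_sub_add_left_eq_sub]
  refine ⟨ψ.measure, fun h0 => ?_, inferInstance,
    ⟨fun g A hA => by rw [← Measure.map_apply (measurable_const_smul g) hA, hmap]⟩⟩
  have hψ := ψ.measure_Ioc (a - 1) b
  rw [h0, Measure.coe_zero, Pi.zero_apply, eq_comm, ENNReal.ofReal_eq_zero, sub_nonpos,
    hF.stieltjesFunction_eq, hF.stieltjesFunction_eq] at hψ
  linarith [hF.rightLim_le (sub_one_lt a), hF.le_rightLim (le_refl b)]

end InvariantMeasure

section Plante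

variable {G : Type*} [Group G] [MulAction G ℝ] [CovariantClass G ℝ HSMul.hSMul LE.le]
  [Group.IsNilpotent G]

theorem hasInvariantRadonMeasure_of_forall_lt_smul {D : Set ℝ} (hD : IsClosedInvariant G D)
    {x₀ : ℝ} (hx₀ : x₀ ∈ D) {h₀ : G} (hlt : ∀ x ∈ D, x < h₀ • x)
    (hcomm : ∀ g : G, ∀ x ∈ D, h₀ • g • x = g • h₀ • x) : HasInvariantRadonMeasure G ℝ := by
  have ho := IsUnboundedOrbit.of_forall_lt_smul hD hlt hx₀
  have hcomm' (g : G) (m : ℤ) := zpow_smul_smul_comm hD (hcomm g) m hx₀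
  set τ := translationNumber h₀ x₀
  have hne (x : ℝ) : (τ '' {g : G | g • x₀ ≤ x}).Nonempty :=
    let ⟨m, hm⟩ := ho.exists_gt x
    ⟨τ (h₀ ^ m), h₀ ^ m, hm.le, rfl⟩
  have hbdd (x : ℝ) : BddAbove (τ '' {g : G | g • x₀ ≤ x}) := by
    refine ⟨orbitIndex h₀ x₀ x + 1, forall_mem_image.mpr fun g hg => ?_⟩
    exact (ho.translationNumber_le hcomm' g).trans (by gcongr; exact ho.orbitIndex_mono hg)
  have hequiv := orbitCoordinate_smul (ho.translationNumber_mul hcomm') hne hbdd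
  refine hasInvariantRadonMeasure_of_monotone (orbitCoordinate_mono hne hbdd)
    (fun g => ⟨τ g, hequiv g⟩) (a := x₀) (b := h₀ • x₀) ?_
  rw [hequiv, ho.translationNumber_self hcomm']
  exact lt_one_add _

theorem hasInvariantRadonMeasure_of_forall_smul_ne {D : Set ℝ} (hD : IsClosedInvariant G D)
    (hne : D.Nonempty) {h₀ : G} (hfree : ∀ x ∈ D, h₀ • x ≠ x)
    (hcomm : ∀ g : G, ∀ x ∈ D, h₀ • g • x = g • h₀ • x) : HasInvariantRadonMeasure G ℝ := by
  obtain ⟨x₀, hx₀⟩ := hne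
  rcases forall_lt_smul_or_forall_smul_lt hD hfree with hlt | hgt
  · exact hasInvariantRadonMeasure_of_forall_lt_smul hD hx₀ hlt hcomm
  · refine hasInvariantRadonMeasure_of_forall_lt_smul hD hx₀ (h₀ := h₀⁻¹)
      (fun x hx => (smulOrderIso h₀).lt_symm_apply.mpr (hgt x hx)) fun g x hx => ?_
    simpa using zpow_smul_smul_comm hD (hcomm g) (-1) hx

lemma hasInvariantRadonMeasure_or_exists_subset_fixingSubgroup {D : Set ℝ}
    (hD : IsClosedInvariant G D) (hne : D.Nonempty) {T : Set G} (hT : T.Finite)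
    (hcomm : ∀ h ∈ T, ∀ g : G, ∀ x ∈ D, h • g • x = g • h • x) :
    HasInvariantRadonMeasure G ℝ ∨
      ∃ F ⊆ D, IsClosedInvariant G F ∧ F.Nonempty ∧ T ⊆ fixingSubgroup G F := by
  induction T, hT using Set.Finite.induction_on with
  | empty => exact .inr ⟨D, subset_rfl, hD, hne, empty_subset _⟩
  | @insert h T _ _ ih =>
    obtain hμ | ⟨F, hFD, hF, hFne, hTF⟩ := ih fun h' hh' => hcomm h' (mem_insert_of_mem h hh')
    · exact .inl hμ
    have hcommF (g : G) (x : ℝ) (hx : x ∈ F) := hcomm h (mem_insert h T) g x (hFD hx)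
    by_cases hfix : (F ∩ MulAction.fixedBy ℝ h).Nonempty
    · refine .inr ⟨F ∩ MulAction.fixedBy ℝ h, inter_subset_left.trans hFD,
        hF.inter_fixedBy hcommF, hfix, insert_subset ?_ ?_⟩
      · exact (mem_fixingSubgroup_iff G).mpr fun x hx => hx.2
      · exact hTF.trans (fixingSubgroup_antitone G ℝ inter_subset_left)
    · exact .inl (hasInvariantRadonMeasure_of_forall_smul_ne hF hFne
        (fun x hx hhx => hfix ⟨x, hx, hhx⟩) hcommF)

theorem hasInvariantRadonMeasure_of_lowerCentralSeries_le_fixingSubgroup {S : Set G}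
    (hS : S.Finite) (hSG : closure S = ⊤) (n : ℕ) {D : Set ℝ} (hD : IsClosedInvariant G D)
    (hne : D.Nonempty) (hfix : (⊤ : Subgroup G).lowerCentralSeries n ≤ fixingSubgroup G D) :
    HasInvariantRadonMeasure G ℝ := by
  induction n generalizing D with
  | zero =>
    obtain ⟨p, hp⟩ := hne
    exact hasInvariantRadonMeasure_of_smul_eq fun g =>
      (mem_fixingSubgroup_iff G).mp (hfix (mem_top g)) p hp
  | succ n ih =>
    obtain hμ | ⟨F, hFD, hF, hFne, hTF⟩ :=
      hasInvariantRadonMeasure_or_exists_subset_fixingSubgroup hD hne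
        (hS.leftNormedCommutators n) fun h hh g x hx => smul_smul_comm_of_lowerCentralSeries_le
          hfix (leftNormedCommutators_subset_lowerCentralSeries S n hh) g hx
    · exact hμ
    exact ih hF hFne <| (lowerCentralSeries_le_closure_leftNormedCommutators_sup hSG n).trans <|
      sup_le ((closure_le _).mpr hTF) (hfix.trans (fixingSubgroup_antitone G ℝ hFD))

theorem hasInvariantRadonMeasure [Group.FG G] : HasInvariantRadonMeasure G ℝ := by
  obtain ⟨S, hSG, hS⟩ := Group.fg_iff.mp ‹Group.FG G›
  obtain ⟨n, hn⟩ := Subgroup.nilpotent_iff_lowerCentralSeries.mp ‹Group.IsNilpotent G›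
  exact hasInvariantRadonMeasure_of_lowerCentralSeries_le_fixingSubgroup hS hSG n
    ⟨isClosed_univ, fun _ _ _ => mem_univ _⟩ univ_nonempty (hn ▸ bot_le)

end Plante

theorem nilpotent_homeos_R_have_invariant_measure_general
    {G : Type*} [Group G] [Group.FG G] [Group.IsNilpotent G]
    (ρ : G → ℝ → ℝ)
    (hmul : ∀ g h : G, ρ (g * h) = ρ g ∘ ρ h)
    (hone : ρ 1 = id)
    (hhomeo : ∀ g : G, StrictMono (ρ g) ∧ Function.Surjective (ρ g)) :
    ∃ μ : Measure ℝ, μ ≠ 0 ∧ (∀ K : Set ℝ, IsCompact K → μ K < ⊤) ∧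
      ∀ g : G, ∀ A : Set ℝ, MeasurableSet A → μ (ρ g ⁻¹' A) = μ A := by
  let _ : MulAction G ℝ :=
    { smul := ρ
      one_smul := congrFun hone
      mul_smul := fun g h => congrFun (hmul g h) }
  have : CovariantClass G ℝ HSMul.hSMul LE.le := ⟨fun g _ _ hxy => (hhomeo g).1.monotone hxy⟩
  obtain ⟨μ, hμ, _, hinv⟩ := hasInvariantRadonMeasure (G := G)
  exact ⟨μ, hμ, fun K hK => hK.measure_lt_top, fun g A hA => hinv.measure_preimage_smul g hA⟩

/-- Every finitely generated nilpotent group of orientation-preserving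
homeomorphisms of `ℝ` preserves a nonzero Borel measure on `ℝ` which is finite
on compact sets.  The group is encoded as an abstract finitely generated
nilpotent group `G` with a faithful action `ρ` on `ℝ` by orientation-preserving
(i.e. strictly increasing) homeomorphisms. -/
theorem nilpotent_homeos_R_have_invariant_measure
    {G : Type*} [Group G] [Group.FG G] [Group.IsNilpotent G]
    (ρ : G → ℝ → ℝ)
    (hmul : ∀ g h : G, ρ (g * h) = ρ g ∘ ρ h)
    (hone : ρ 1 = id)
    (hhomeo : ∀ g : G, StrictMono (ρ g) ∧ Function.Surjective (ρ g))
    (hfaithful : ∀ g : G, ρ g = id → g = 1) :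
    ∃ μ : Measure ℝ, μ ≠ 0 ∧ (∀ K : Set ℝ, IsCompact K → μ K < ⊤) ∧
      ∀ g : G, ∀ A : Set ℝ, MeasurableSet A → μ (ρ g ⁻¹' A) = μ A :=
  nilpotent_homeos_R_have_invariant_measure_general ρ hmul hone hhomeo
end

section
/- Any nilpotent group of orientation-preserving piecewise linear homeomorphisms of the closed interval [0,1] is abelian. -/
open Set Filter Topology
open scoped commutatorElement

/-- `f : ℝ → ℝ` is piecewise linear on `[0,1]`: there is a finite partition
`0 = t₀ < t₁ < ⋯ < t_k = 1` such that `f` is affine on each subinterval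
`[t_{i}, t_{i+1}]`. -/
def IsPLOnUnitInterval (f : ℝ → ℝ) : Prop :=
  ∃ (k : ℕ) (t : ℕ → ℝ), 0 < k ∧ t 0 = 0 ∧ t k = 1 ∧
    (∀ i < k, t i < t (i + 1)) ∧
    ∀ i < k, ∃ m c : ℝ, ∀ x ∈ Icc (t i) (t (i + 1)), f x = m * x + c

/-!
Let `z = ⁅a, b⁆` commute with `a` and `b`, and let `s` be the infimum of the points of `[0,1]`
moved by `z`. As `a` and `b` commute with `z`, they preserve the support of `z` and so fix `s`.
A PL homeomorphism fixing `s` is a dilation centred at `s` just to the right of `s`, and the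
ratios multiply under composition; hence the ratio of the commutator `z` is `1`, i.e. `z` is the
identity just to the right of `s`, contradicting the choice of `s`. So in a group of PL
homeomorphisms no nontrivial commutator commutes with both of its entries, and a nilpotent group
with this property is abelian: its upper central series cannot grow beyond the centre.
-/

namespace Group.IsNilpotent

theorem commute_of_commutator_mem_center {G : Type*} [Group G] [IsNilpotent G]
    (h : ∀ a b : G, ⁅a, b⁆ ∈ Subgroup.center G → ⁅a, b⁆ = 1) (a b : G) : Commute a b := by
  have upper_le_center : ∀ n, Subgroup.upperCentralSeries G (n + 1) ≤ Subgroup.center G := by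
    intro n
    induction n with
    | zero => exact (Subgroup.upperCentralSeries_one G).le
    | succ n ih =>
      intro x hx
      refine Subgroup.mem_center_iff.mpr fun y => ?_
      have hxy := h x y (ih (Subgroup.mem_upperCentralSeries_succ_iff.mp hx y))
      exact (commutatorElement_eq_one_iff_commute.mp hxy).eq.symm
  obtain ⟨n, hn⟩ := nilpotent G
  have ha : a ∈ Subgroup.center G := upper_le_center n <|
    Subgroup.upperCentralSeries_mono G n.le_succ (hn ▸ Subgroup.mem_top a)
  exact (Subgroup.mem_center_iff.mp ha b).symm

end Group.IsNilpotent

def HasRightSlopeAt (f : ℝ → ℝ) (s m : ℝ) : Prop :=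
  ∀ᶠ x in 𝓝[≥] s, f x = s + m * (x - s)

theorem hasRightSlopeAt_id (s : ℝ) : HasRightSlopeAt (fun x => x) s 1 :=
  Eventually.of_forall fun x => by ring

namespace HasRightSlopeAt

variable {f g : ℝ → ℝ} {s m n : ℝ}

theorem congr (hf : HasRightSlopeAt f s m) (hfg : f =ᶠ[𝓝[≥] s] g) :
    HasRightSlopeAt g s m := by
  filter_upwards [hf, hfg] with x hfx hfgx
  rw [← hfgx, hfx]

theorem apply_self (hf : HasRightSlopeAt f s m) : f s = s := by
  simpa using hf.self_of_nhdsWithin self_mem_Ici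

theorem tendsto (hf : HasRightSlopeAt f s m) (hm : 0 ≤ m) :
    Tendsto f (𝓝[≥] s) (𝓝[≥] s) := by
  have hdil : Tendsto (fun x => s + m * (x - s)) (𝓝[≥] s) (𝓝[≥] s) := by
    refine tendsto_nhdsWithin_of_tendsto_nhds_of_eventually_within _ ?_ ?_
    · have : Continuous fun x : ℝ => s + m * (x - s) := by fun_prop
      simpa using (this.tendsto s).mono_left nhdsWithin_le_nhds
    · filter_upwards [self_mem_nhdsWithin] with x (hx : s ≤ x)
      have : 0 ≤ m * (x - s) := mul_nonneg hm (sub_nonneg.mpr hx)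
      exact le_add_of_nonneg_right this
  exact hdil.congr' (hf.mono fun _ hx => hx.symm)

theorem comp (hf : HasRightSlopeAt f s m) (hg : HasRightSlopeAt g s n) (hn : 0 ≤ n) :
    HasRightSlopeAt (f ∘ g) s (m * n) := by
  filter_upwards [hg, (hg.tendsto hn).eventually hf] with x hgx hfgx
  rw [Function.comp_apply, hfgx, hgx]
  ring

theorem unique (hm : HasRightSlopeAt f s m) (hn : HasRightSlopeAt f s n) : m = n := by
  obtain ⟨x, ⟨hfm, hfn⟩, hsx : s < x⟩ :=
    ((hm.and hn).filter_mono (nhdsWithin_mono _ Ioi_subset_Ici_self)).and self_mem_nhdsWithin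
      |>.exists
  have : m * (x - s) = n * (x - s) := by linarith
  exact mul_right_cancel₀ (sub_ne_zero.mpr hsx.ne') this

theorem pos {t : Set ℝ} (hf : HasRightSlopeAt f s m) (hmono : StrictMonoOn f t)
    (ht : t ∈ 𝓝[≥] s) : 0 < m := by
  obtain ⟨x, ⟨hfx, hxt⟩, hsx : s < x⟩ :=
    ((hf.and ht).filter_mono (nhdsWithin_mono _ Ioi_subset_Ici_self)).and self_mem_nhdsWithin
      |>.exists
  have hlt : f s < f x := hmono (mem_of_mem_nhdsWithin self_mem_Ici ht) hxt hsx
  rw [hf.apply_self, hfx] at hlt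
  exact pos_of_mul_pos_left (by linarith) (sub_pos.mpr hsx).le

end HasRightSlopeAt

theorem exists_mem_Ico_succ_of_mem_Ico {α : Type*} [LinearOrder α] {t : ℕ → α} {s : α} :
    ∀ {k : ℕ}, s ∈ Ico (t 0) (t k) → ∃ i < k, s ∈ Ico (t i) (t (i + 1))
  | 0, h => absurd h.2 (not_lt.mpr h.1)
  | k + 1, h => by
    by_cases hk : t k ≤ s
    · exact ⟨k, k.lt_succ_self, hk, h.2⟩
    · obtain ⟨i, hik, hi⟩ := exists_mem_Ico_succ_of_mem_Ico ⟨h.1, not_le.mp hk⟩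
      exact ⟨i, hik.trans k.lt_succ_self, hi⟩

theorem IsPLOnUnitInterval.exists_hasRightSlopeAt {f : ℝ → ℝ} (hf : IsPLOnUnitInterval f)
    {s : ℝ} (hs : s ∈ Ico (0 : ℝ) 1) (hfs : f s = s) : ∃ m, HasRightSlopeAt f s m := by
  obtain ⟨k, t, -, ht0, htk, -, haffine⟩ := hf
  obtain ⟨i, hik, hti, hsti⟩ := exists_mem_Ico_succ_of_mem_Ico (t := t) (ht0 ▸ htk ▸ hs)
  obtain ⟨m, c, hmc⟩ := haffine i hik
  have hc : c = s - m * s := by linarith [hmc s ⟨hti, hsti.le⟩]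
  refine ⟨m, ?_⟩
  filter_upwards [Icc_mem_nhdsGE hsti] with x hx
  rw [hmc x ⟨hti.trans hx.1, hx.2⟩, hc]
  ring

structure IsPLActionOnUnitInterval {G : Type*} [Group G] (ρ : G → ℝ → ℝ) : Prop where
  mul_apply : ∀ g h : G, ∀ x ∈ Icc (0 : ℝ) 1, ρ (g * h) x = ρ g (ρ h x)
  one_apply : ∀ x ∈ Icc (0 : ℝ) 1, ρ 1 x = x
  mapsTo : ∀ g : G, MapsTo (ρ g) (Icc 0 1) (Icc 0 1)
  strictMonoOn : ∀ g : G, StrictMonoOn (ρ g) (Icc 0 1)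
  isPL : ∀ g : G, IsPLOnUnitInterval (ρ g)

namespace IsPLActionOnUnitInterval

variable {G : Type*} [Group G] {ρ : G → ℝ → ℝ}

theorem apply_inv_apply (hρ : IsPLActionOnUnitInterval ρ) (g : G) {x : ℝ}
    (hx : x ∈ Icc (0 : ℝ) 1) : ρ g⁻¹ (ρ g x) = x := by
  rw [← hρ.mul_apply _ _ x hx, inv_mul_cancel, hρ.one_apply x hx]

theorem apply_apply_inv (hρ : IsPLActionOnUnitInterval ρ) (g : G) {x : ℝ}
    (hx : x ∈ Icc (0 : ℝ) 1) : ρ g (ρ g⁻¹ x) = x := by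
  simpa using hρ.apply_inv_apply g⁻¹ hx

theorem apply_one (hρ : IsPLActionOnUnitInterval ρ) (g : G) : ρ g 1 = 1 := by
  have h1 : (1 : ℝ) ∈ Icc 0 1 := right_mem_Icc.mpr zero_le_one
  refine le_antisymm (hρ.mapsTo g h1).2 ?_
  calc (1 : ℝ) = ρ g (ρ g⁻¹ 1) := (hρ.apply_apply_inv g h1).symm
    _ ≤ ρ g 1 := (hρ.strictMonoOn g).monotoneOn (hρ.mapsTo g⁻¹ h1) h1 (hρ.mapsTo g⁻¹ h1).2

theorem mapsTo_support_of_commute (hρ : IsPLActionOnUnitInterval ρ) {z g : G}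
    (hzg : Commute z g) : MapsTo (ρ g) {x ∈ Icc 0 1 | ρ z x ≠ x} {x ∈ Icc 0 1 | ρ z x ≠ x} := by
  rintro x ⟨hx, hzx⟩
  refine ⟨hρ.mapsTo g hx, fun hfix => hzx ?_⟩
  have : ρ g (ρ z x) = ρ g x := by
    rw [← hρ.mul_apply _ _ x hx, ← hzg.eq, hρ.mul_apply _ _ x hx, hfix]
  rw [← hρ.apply_inv_apply g (hρ.mapsTo z hx), this, hρ.apply_inv_apply g hx]

theorem apply_sInf_eq (hρ : IsPLActionOnUnitInterval ρ) {g : G} {S : Set ℝ} (hS : S.Nonempty)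
    (hSI : S ⊆ Icc 0 1) (hg : MapsTo (ρ g) S S) (hg' : MapsTo (ρ g⁻¹) S S) :
    ρ g (sInf S) = sInf S := by
  have hbdd : BddBelow S := bddBelow_Icc.mono hSI
  have hinf : sInf S ∈ Icc (0 : ℝ) 1 :=
    isClosed_Icc.closure_subset_iff.mpr hSI (csInf_mem_closure hS hbdd)
  have apply_le : ∀ f : G, MapsTo (ρ f⁻¹) S S → ρ f (sInf S) ≤ sInf S := fun f hf =>
    le_csInf hS fun y hy => calc
      ρ f (sInf S) ≤ ρ f (ρ f⁻¹ y) :=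
        (hρ.strictMonoOn f).monotoneOn hinf (hSI (hf hy)) (csInf_le hbdd (hf hy))
      _ = y := hρ.apply_apply_inv f (hSI hy)
  refine le_antisymm (apply_le g hg') ?_
  calc sInf S = ρ g (ρ g⁻¹ (sInf S)) := (hρ.apply_apply_inv g hinf).symm
    _ ≤ ρ g (sInf S) := (hρ.strictMonoOn g).monotoneOn (hρ.mapsTo g⁻¹ hinf) hinf
        (apply_le g⁻¹ (by rwa [inv_inv]))

variable {s : ℝ}

theorem hasRightSlopeAt_one (hρ : IsPLActionOnUnitInterval ρ) (hs : s ∈ Ico (0 : ℝ) 1) :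
    HasRightSlopeAt (ρ 1) s 1 :=
  (hasRightSlopeAt_id s).congr <| by
    filter_upwards [Icc_mem_nhdsGE hs.2] with x hx
    exact (hρ.one_apply x ⟨hs.1.trans hx.1, hx.2⟩).symm

theorem hasRightSlopeAt_mul (hρ : IsPLActionOnUnitInterval ρ) (hs : s ∈ Ico (0 : ℝ) 1)
    {g h : G} {m n : ℝ} (hg : HasRightSlopeAt (ρ g) s m)
    (hh : HasRightSlopeAt (ρ h) s n) (hn : 0 ≤ n) : HasRightSlopeAt (ρ (g * h)) s (m * n) :=
  (hg.comp hh hn).congr <| by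
    filter_upwards [Icc_mem_nhdsGE hs.2] with x hx
    exact (hρ.mul_apply g h x ⟨hs.1.trans hx.1, hx.2⟩).symm

theorem exists_hasRightSlopeAt (hρ : IsPLActionOnUnitInterval ρ) (hs : s ∈ Ico (0 : ℝ) 1)
    {g : G} (hgs : ρ g s = s) : ∃ m, 0 < m ∧ HasRightSlopeAt (ρ g) s m := by
  obtain ⟨m, hm⟩ := (hρ.isPL g).exists_hasRightSlopeAt hs hgs
  have hnhds : Icc (0 : ℝ) 1 ∈ 𝓝[≥] s :=
    mem_of_superset (Icc_mem_nhdsGE hs.2) (Icc_subset_Icc_left hs.1)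
  exact ⟨m, hm.pos (hρ.strictMonoOn g) hnhds, hm⟩

theorem hasRightSlopeAt_inv (hρ : IsPLActionOnUnitInterval ρ) (hs : s ∈ Ico (0 : ℝ) 1)
    {g : G} {m : ℝ} (hg : HasRightSlopeAt (ρ g) s m) : HasRightSlopeAt (ρ g⁻¹) s m⁻¹ := by
  have hfix : ρ g⁻¹ s = s := by
    conv_lhs => rw [← hg.apply_self]
    exact hρ.apply_inv_apply g ⟨hs.1, hs.2.le⟩
  obtain ⟨m', hm', hgm'⟩ := hρ.exists_hasRightSlopeAt hs hfix
  have hmm' : m * m' = 1 := by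
    have := hρ.hasRightSlopeAt_mul hs hg hgm' hm'.le
    rw [mul_inv_cancel] at this
    exact this.unique (hρ.hasRightSlopeAt_one hs)
  rwa [← eq_inv_of_mul_eq_one_right hmm']

theorem hasRightSlopeAt_commutator (hρ : IsPLActionOnUnitInterval ρ)
    (hs : s ∈ Ico (0 : ℝ) 1) {a b : G} (ha : ρ a s = s) (hb : ρ b s = s) :
    HasRightSlopeAt (ρ ⁅a, b⁆) s 1 := by
  obtain ⟨ma, hma₀, hma⟩ := hρ.exists_hasRightSlopeAt hs ha
  obtain ⟨mb, hmb₀, hmb⟩ := hρ.exists_hasRightSlopeAt hs hb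
  have h := hρ.hasRightSlopeAt_mul hs
    (hρ.hasRightSlopeAt_mul hs (hρ.hasRightSlopeAt_mul hs hma hmb hmb₀.le)
      (hρ.hasRightSlopeAt_inv hs hma) (inv_nonneg.mpr hma₀.le))
    (hρ.hasRightSlopeAt_inv hs hmb) (inv_nonneg.mpr hmb₀.le)
  have hprod : ma * mb * ma⁻¹ * mb⁻¹ = 1 := by field_simp
  rwa [← commutatorElement_def, hprod] at h

theorem apply_commutator_eq_self (hρ : IsPLActionOnUnitInterval ρ) {a b : G}
    (ha : Commute ⁅a, b⁆ a) (hb : Commute ⁅a, b⁆ b) : ∀ x ∈ Icc (0 : ℝ) 1, ρ ⁅a, b⁆ x = x := by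
  set z := ⁅a, b⁆
  set S := {x ∈ Icc 0 1 | ρ z x ≠ x}
  by_contra! hS
  have hSne : S.Nonempty := hS
  have hSI : S ⊆ Icc 0 1 := sep_subset _ _
  have hbdd : BddBelow S := bddBelow_Icc.mono hSI
  have hs : sInf S ∈ Ico (0 : ℝ) 1 := by
    refine ⟨le_csInf hSne fun x hx => (hSI hx).1, ?_⟩
    obtain ⟨x₀, hx₀⟩ := hSne
    refine (csInf_le hbdd hx₀).trans_lt (hx₀.1.2.lt_of_ne fun h => hx₀.2 ?_)
    rw [h, hρ.apply_one]
  have hfix : ∀ g, Commute z g → ρ g (sInf S) = sInf S := fun g hg =>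
    hρ.apply_sInf_eq hSne hSI (hρ.mapsTo_support_of_commute hg)
      (hρ.mapsTo_support_of_commute hg.inv_right)
  have hz : ∀ᶠ x in 𝓝[≥] sInf S, ρ z x = x :=
    (hρ.hasRightSlopeAt_commutator hs (hfix a ha) (hfix b hb)).mono fun x hx => by rw [hx]; ring
  obtain ⟨x, hxS, hzx⟩ :=
    ((isGLB_csInf hSne hbdd).frequently_mem hSne).and_eventually hz |>.exists
  exact hxS.2 hzx

end IsPLActionOnUnitInterval

/-- Any nilpotent group of orientation-preserving piecewise linear
homeomorphisms of `[0,1]` is abelian.  The group is encoded as an abstract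
nilpotent group `G` with a faithful action `ρ` on `[0,1]` by strictly
increasing piecewise linear bijections of `[0,1]`. -/
theorem abelian_of_nilpotent_PL_homeos_Icc
    {G : Type*} [Group G] [Group.IsNilpotent G] (ρ : G → ℝ → ℝ)
    (hmul : ∀ g h : G, ∀ x ∈ Icc (0:ℝ) 1, ρ (g * h) x = ρ g (ρ h x))
    (hone : ∀ x ∈ Icc (0:ℝ) 1, ρ 1 x = x)
    (hhomeo : ∀ g : G, StrictMonoOn (ρ g) (Icc (0:ℝ) 1) ∧ ρ g '' Icc (0:ℝ) 1 = Icc (0:ℝ) 1)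
    (hPL : ∀ g : G, IsPLOnUnitInterval (ρ g))
    (hfaithful : ∀ g : G, (∀ x ∈ Icc (0:ℝ) 1, ρ g x = x) → g = 1) :
    ∀ a b : G, a * b = b * a := by
  have hρ : IsPLActionOnUnitInterval ρ :=
    ⟨hmul, hone, fun g => (mapsTo_image (ρ g) _).mono_right (hhomeo g).2.subset,
      fun g => (hhomeo g).1, hPL⟩
  intro a b
  refine (Group.IsNilpotent.commute_of_commutator_mem_center (fun x y hxy => ?_) a b).eq
  have hcomm : ∀ g, Commute ⁅x, y⁆ g := fun g => (Subgroup.mem_center_iff.mp hxy g).symm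
  exact hfaithful _ (hρ.apply_commutator_eq_self (hcomm x) (hcomm y))
end

section
/- Any nilpotent group of orientation-preserving piecewise linear homeomorphisms of the circle S¹ is abelian. -/
open Set

/-- `F : ℝ → ℝ` is a lift of an orientation-preserving piecewise linear
homeomorphism of the circle `S¹ = ℝ/ℤ`: it is strictly increasing, commutes
with the unit translation, and there is a partition
`t₀ < t₁ < ⋯ < t_k = t₀ + 1` of a fundamental domain such that `F` is affine
on each subinterval `[t_i, t_{i+1}]` (so the induced circle map is affine on
each of finitely many arcs). -/
def IsPLCircleLift (F : ℝ → ℝ) : Prop :=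
  StrictMono F ∧ (∀ x : ℝ, F (x + 1) = F x + 1) ∧
    ∃ (k : ℕ) (t : ℕ → ℝ), 0 < k ∧ t k = t 0 + 1 ∧
      (∀ i < k, t i < t (i + 1)) ∧
      ∀ i < k, ∃ m c : ℝ, ∀ x ∈ Icc (t i) (t (i + 1)), F x = m * x + c

/-!
If `G` is not abelian, nilpotency provides a nontrivial central commutator `z = ⁅x, y⁆`.
For degree one lifts `X`, `Y` of `x`, `y`, the lift `⁅X, Y⁆` of `z` commutes with `Y` up to an
integer translation because `z` is central; with the conjugacy invariance of translation numbers
this forces the translation number of `⁅X, Y⁆` to vanish, so `z` fixes a point of the circle.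
Replacing `z` by `z⁻¹ = ⁅y, x⁆` if necessary, `z` has a PL lift `F` with a fixed point and a point
it moves up. Because `F` has a fixed point, every lift of every element of `G` commutes with `F`
on the nose, so `G` permutes the fixed points of `F` with right slope `> 1`; modulo `ℤ` these form
a nonempty finite set `S`. By the chain rule, the product over `S` of the right slopes of `g` is a
homomorphism `G → ℝ`. It is `> 1` at `z`, which is absurd for a commutator.
-/

open Filter Topology Function
open scoped commutatorElement Pointwise

local notation "𝕋" => AddCircle (1 : ℝ)

theorem Group.IsNilpotent.mul_comm_of_forall_commutatorElement_mem_center {G : Type*} [Group G]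
    [Group.IsNilpotent G] (h : ∀ x y : G, ⁅x, y⁆ ∈ Subgroup.center G → ⁅x, y⁆ = 1) (a b : G) :
    a * b = b * a := by
  by_contra hab
  have hclass : ¬ Group.nilpotencyClass G ≤ 1 := fun hle =>
    hab ((Group.IsNilpotent.nilpotencyClass_le_one_iff.1 hle).is_comm.comm a b)
  -- The last nontrivial term of the lower central series is central and generated by commutators.
  obtain ⟨k, hk⟩ : ∃ k, Group.nilpotencyClass G = k + 2 :=
    ⟨_, (Nat.sub_add_cancel (by omega)).symm⟩
  have hne : (⊤ : Subgroup G).lowerCentralSeries (k + 1) ≠ ⊥ := by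
    rw [Ne, Subgroup.lowerCentralSeries_eq_bot_iff_nilpotencyClass_le]; omega
  rw [Subgroup.lowerCentralSeries_succ, Subgroup.commutator_def, Ne,
    Subgroup.closure_eq_bot_iff, Set.not_subset] at hne
  obtain ⟨_, ⟨x, hx, y, -, rfl⟩, hxy⟩ := hne
  refine hxy (h x y (Subgroup.mem_center_iff.2 fun g => ?_))
  have hmem : ⁅⁅x, y⁆, g⁆ ∈ (⊤ : Subgroup G).lowerCentralSeries (k + 2) :=
    Subgroup.commutator_mem_commutator
      (Subgroup.commutator_mem_commutator hx (Subgroup.mem_top y)) (Subgroup.mem_top g)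
  rwa [← hk, Subgroup.lowerCentralSeries_nilpotencyClass, Subgroup.mem_bot,
    commutatorElement_eq_one_iff_mul_comm, eq_comm] at hmem

theorem MonoidHom.map_commutatorElement_eq_one {G M : Type*} [Group G] [CommMonoid M]
    (Φ : G →* M) (a b : G) : Φ ⁅a, b⁆ = 1 := by
  rw [← Φ.coe_toHomUnits, map_commutatorElement,
    commutatorElement_eq_one_iff_mul_comm.2 (mul_comm _ _), Units.val_one]

theorem exists_int_eq_add_of_coe_eq {x y : ℝ} (h : (x : 𝕋) = y) : ∃ n : ℤ, x = y + n := by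
  obtain ⟨n, hn⟩ := (AddCircle.coe_eq_zero_iff (1 : ℝ)).1
    (by rw [AddCircle.coe_sub, h, sub_self] : ((x - y : ℝ) : 𝕋) = 0)
  exact ⟨n, by rw [zsmul_one] at hn; linarith⟩

theorem exists_int_add_mem_Ico (a x : ℝ) : ∃ n : ℤ, x + n ∈ Ico a (a + 1) := by
  obtain ⟨n, hn, -⟩ := existsUnique_add_zsmul_mem_Ico one_pos x a
  exact ⟨n, by simpa using hn⟩

theorem exists_int_eq_add_of_semiconj {F F' : ℝ → ℝ} {φ : 𝕋 → 𝕋} (hF : Continuous F)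
    (hF' : Continuous F') (h : Semiconj ((↑) : ℝ → 𝕋) F φ)
    (h' : Semiconj ((↑) : ℝ → 𝕋) F' φ) : ∃ n : ℤ, ∀ x, F x = F' x + n := by
  have hconst := (AddCircle.isCoveringMap_coe (1 : ℝ)).const_of_comp (hF.sub hF') fun a a' => by
    simp only [Pi.sub_apply, AddCircle.coe_sub, h a, h' a, h a', h' a', sub_self]
  obtain ⟨n, hn⟩ := exists_int_eq_add_of_coe_eq (by rw [h 0, h' 0] : (F 0 : 𝕋) = F' 0)
  refine ⟨n, fun x => ?_⟩
  have := hconst x 0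
  simp only [Pi.sub_apply] at this
  linarith

theorem derivWithin_eq_of_semiconj {F F' : ℝ → ℝ} {φ : 𝕋 → 𝕋} (hF : Continuous F)
    (hF' : Continuous F') (h : Semiconj ((↑) : ℝ → 𝕋) F φ)
    (h' : Semiconj ((↑) : ℝ → 𝕋) F' φ) (p : ℝ) :
    derivWithin F (Ici p) p = derivWithin F' (Ici p) p := by
  obtain ⟨n, hn⟩ := exists_int_eq_add_of_semiconj hF hF' h h'
  rw [show F = fun x => F' x + n from funext hn, derivWithin_add_const]

namespace CircleDeg1Lift

local notation "τ" => translationNumber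

theorem continuous_units (u : CircleDeg1Liftˣ) : Continuous (u : CircleDeg1Lift) :=
  (continuous_iff_surjective _).2 (by simpa using (toOrderIso u).surjective)

theorem translationNumber_eq_add_int_of_forall {f g : CircleDeg1Lift} {m : ℤ}
    (h : ∀ x, f x = g x + m) : τ f = τ g + m := by
  have hf : f = translate (Multiplicative.ofAdd (m : ℝ)) * g :=
    ext fun x => by rw [mul_apply, translate_apply, h, add_comm]
  have hcomm : Commute (translate (Multiplicative.ofAdd (m : ℝ)) : CircleDeg1Lift) g :=
    commute_iff_commute.2 fun x => by simp only [translate_apply, map_int_add]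
  rw [hf, translationNumber_mul_of_commute hcomm, translationNumber_translate, add_comm]

theorem translationNumber_commutatorElement_eq_zero {a b : CircleDeg1Liftˣ} {m : ℤ}
    (h : ∀ x, ((⁅a, b⁆ * b : CircleDeg1Liftˣ) : CircleDeg1Lift) x =
      ((b * ⁅a, b⁆ : CircleDeg1Liftˣ) : CircleDeg1Lift) x + m) :
    τ (⁅a, b⁆ : CircleDeg1Liftˣ) = 0 := by
  set c := ⁅a, b⁆
  have hm : (m : ℝ) = 0 := by
    have hconj : τ ((c * b : CircleDeg1Liftˣ) : CircleDeg1Lift) =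
        τ ((b * c : CircleDeg1Liftˣ) : CircleDeg1Lift) :=
      translationNumber_eq_of_semiconjBy (f := b)
        (by simp only [SemiconjBy, Units.val_mul, mul_assoc])
    linarith [translationNumber_eq_add_int_of_forall h]
  have hcb : Commute c b := Units.ext <| ext fun x => by simpa [hm] using h x
  have hcb' : Commute ((c * b : CircleDeg1Liftˣ) : CircleDeg1Lift)
      ((b⁻¹ : CircleDeg1Liftˣ) : CircleDeg1Lift) :=
    ((hcb.mul_left (Commute.refl b)).inv_right).map (Units.coeHom CircleDeg1Lift)
  have hcb_conj : c * b = a * b * a⁻¹ := by simp [c, commutatorElement_def]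
  calc τ (c : CircleDeg1Lift)
      = τ (((c * b : CircleDeg1Liftˣ) : CircleDeg1Lift) *
          ((b⁻¹ : CircleDeg1Liftˣ) : CircleDeg1Lift)) := by
        rw [← Units.val_mul, mul_inv_cancel_right]
    _ = τ b + -τ b := by
        rw [translationNumber_mul_of_commute hcb', hcb_conj, translationNumber_units_inv,
          Units.val_mul, Units.val_mul, translationNumber_conj_eq]
    _ = 0 := add_neg_cancel _

theorem commute_of_semiconj {f : CircleDeg1Lift} {H : ℝ → ℝ} {φ ψ : 𝕋 → 𝕋} (hf : Continuous f)
    (hH : Continuous H) (hfφ : Semiconj ((↑) : ℝ → 𝕋) f φ) (hHψ : Semiconj ((↑) : ℝ → 𝕋) H ψ)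
    (hφψ : Function.Commute φ ψ) {x₀ : ℝ} (hx₀ : f x₀ = x₀) : Function.Commute f H := by
  obtain ⟨n, hn⟩ := exists_int_eq_add_of_semiconj (hf.comp hH) (hH.comp hf) (hfφ.comp_right hHψ)
    (by rw [Semiconj.comp_eq hφψ]; exact hHψ.comp_right hfφ)
  have hτ : τ f = n := f.translationNumber_of_eq_add_int (x := H x₀) (by simpa [hx₀] using hn x₀)
  have hτ₀ : τ f = 0 := by
    simpa using f.translationNumber_of_eq_add_int (x := x₀) (m := 0) (by simpa using hx₀)
  intro x
  simpa [← hτ, hτ₀] using hn x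

end CircleDeg1Lift

section LiftSubgroup

variable (G : Type*) [Group G] [MulAction G 𝕋]

def liftSubgroup : Subgroup (CircleDeg1Liftˣ × G) where
  carrier := {q | Semiconj ((↑) : ℝ → 𝕋) (q.1 : CircleDeg1Lift) (q.2 • ·)}
  mul_mem' {q r} hq hr x := by
    simp only [Prod.fst_mul, Prod.snd_mul, Units.val_mul, CircleDeg1Lift.mul_apply, mul_smul,
      hq (r.1 x), hr x]
  one_mem' x := by simp
  inv_mem' {q} hq := hq.inverses_right (CircleDeg1Lift.units_apply_inv_apply q.1)
    (inv_smul_smul q.2)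

variable {G}

theorem exists_smul_eq_of_commutatorElement_mem_center {u v : CircleDeg1Liftˣ} {x y : G}
    (hu : (u, x) ∈ liftSubgroup G) (hv : (v, y) ∈ liftSubgroup G)
    (hxy : ⁅x, y⁆ ∈ Subgroup.center G) : ∃ x₀ : ℝ, ⁅x, y⁆ • (x₀ : 𝕋) = x₀ := by
  have hc : (⁅u, v⁆, ⁅x, y⁆) ∈ liftSubgroup G :=
    mul_mem (mul_mem (mul_mem hu hv) (inv_mem hu)) (inv_mem hv)
  have hvc : (v * ⁅u, v⁆, ⁅x, y⁆ * y) ∈ liftSubgroup G := by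
    rw [← Subgroup.mem_center_iff.1 hxy y]; exact mul_mem hv hc
  obtain ⟨m, hm⟩ := exists_int_eq_add_of_semiconj (CircleDeg1Lift.continuous_units _)
    (CircleDeg1Lift.continuous_units _) (mul_mem hc hv) hvc
  have hτ := CircleDeg1Lift.translationNumber_commutatorElement_eq_zero hm
  obtain ⟨x₀, hx₀⟩ := CircleDeg1Lift.exists_eq_add_translationNumber _
    (CircleDeg1Lift.continuous_units ⁅u, v⁆)
  exact ⟨x₀, (hc x₀).symm.trans (by rw [hx₀, hτ, add_zero])⟩

end LiftSubgroup

theorem exists_lt_mem_Ico_of_mem_Ico {α : Type*} [LinearOrder α] (t : ℕ → α) {k : ℕ} {q : α}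
    (hq : q ∈ Ico (t 0) (t k)) : ∃ i < k, q ∈ Ico (t i) (t (i + 1)) := by
  induction k with
  | zero => exact absurd hq.2 (not_lt.2 hq.1)
  | succ k ih =>
    by_cases hk : t k ≤ q
    · exact ⟨k, k.lt_succ_self, hk, hq.2⟩
    · obtain ⟨i, hi, hiq⟩ := ih ⟨hq.1, not_le.1 hk⟩
      exact ⟨i, hi.trans k.lt_succ_self, hiq⟩

theorem hasDerivWithinAt_Ici_of_eventuallyEq {F : ℝ → ℝ} {p m c : ℝ}
    (h : F =ᶠ[𝓝[≥] p] fun x => m * x + c) : HasDerivWithinAt F m (Ici p) p := by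
  have : HasDerivAt (fun x => m * x + c) m p := by
    simpa using ((hasDerivAt_id p).const_mul m).add_const c
  exact this.hasDerivWithinAt.congr_of_eventuallyEq_of_mem h self_mem_Ici

theorem derivWithin_Ici_of_eventuallyEq {F : ℝ → ℝ} {p m c : ℝ}
    (h : F =ᶠ[𝓝[≥] p] fun x => m * x + c) : derivWithin F (Ici p) p = m :=
  (hasDerivWithinAt_Ici_of_eventuallyEq h).derivWithin (uniqueDiffWithinAt_Ici p)

def expandingFixedPoints (F : ℝ → ℝ) : Set ℝ := {p | F p = p ∧ 1 < derivWithin F (Ici p) p}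

namespace IsPLCircleLift

variable {F H : ℝ → ℝ}

def toCircleDeg1Lift (hF : IsPLCircleLift F) : CircleDeg1Lift := ⟨⟨F, hF.1.monotone⟩, hF.2.1⟩

theorem map_add_int (hF : IsPLCircleLift F) (x : ℝ) (n : ℤ) : F (x + n) = F x + n :=
  hF.toCircleDeg1Lift.map_add_int x n

theorem sub_int (hF : IsPLCircleLift F) (n : ℤ) : IsPLCircleLift fun x => F x - n := by
  obtain ⟨hmono, hper, k, t, hk, htk, ht, haff⟩ := hF
  refine ⟨fun a b hab => sub_lt_sub_right (hmono hab) _, fun x => by simp only [hper]; ring,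
    k, t, hk, htk, ht, fun i hi => ?_⟩
  obtain ⟨m, c, hmc⟩ := haff i hi
  exact ⟨m, c - n, fun x hx => by simp only [hmc x hx]; ring⟩

theorem surjective (hF : IsPLCircleLift F) : Surjective F := by
  obtain ⟨k, t, -, htk, ht, haff⟩ := hF.2.2
  have hpieces : ∀ j ≤ k, Icc (F (t 0)) (F (t j)) ⊆ range F := by
    intro j
    induction j with
    | zero => intro _ y hy; exact ⟨t 0, le_antisymm hy.1 hy.2⟩
    | succ j ih =>
      intro hj y hy
      rcases le_total y (F (t j)) with hyj | hyj
      · exact ih (Nat.le_of_succ_le hj) ⟨hy.1, hyj⟩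
      · obtain ⟨m, c, hmc⟩ := haff j hj
        have hcont : ContinuousOn F (Icc (t j) (t (j + 1))) :=
          (continuous_const.mul continuous_id |>.add continuous_const).continuousOn.congr hmc
        obtain ⟨x, -, rfl⟩ := intermediate_value_Icc (ht j hj).le hcont ⟨hyj, hy.2⟩
        exact mem_range_self x
  intro y
  obtain ⟨n, hn⟩ := exists_int_add_mem_Ico (F (t 0)) y
  obtain ⟨x, hx⟩ := hpieces k le_rfl ⟨hn.1, by rw [htk, hF.2.1]; exact hn.2.le⟩
  have hsub : F (x - n) = F x - n := hF.toCircleDeg1Lift.map_sub_int x n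
  exact ⟨x - n, by rw [hsub, hx, add_sub_cancel_right]⟩

theorem continuous (hF : IsPLCircleLift F) : Continuous F :=
  hF.1.monotone.continuous_of_surjective hF.surjective

theorem exists_unit (hF : IsPLCircleLift F) : ∃ u : CircleDeg1Liftˣ, ⇑(u : CircleDeg1Lift) = F :=
  ⟨(CircleDeg1Lift.isUnit_iff_bijective.2 ⟨hF.1.injective, hF.surjective⟩ :
    IsUnit hF.toCircleDeg1Lift).unit, rfl⟩

theorem exists_eventuallyEq_affine (hF : IsPLCircleLift F) (p : ℝ) :
    ∃ m > 0, ∃ c, F =ᶠ[𝓝[≥] p] fun x => m * x + c := by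
  obtain ⟨k, t, -, htk, ht, haff⟩ := hF.2.2
  obtain ⟨n, hn⟩ := exists_int_add_mem_Ico (t 0) p
  obtain ⟨i, hi, hpi⟩ := exists_lt_mem_Ico_of_mem_Ico t (by rwa [htk] : p + n ∈ Ico (t 0) (t k))
  obtain ⟨m, c, hmc⟩ := haff i hi
  have hm : 0 < m := by
    have := hF.1 (ht i hi)
    rw [hmc _ ⟨le_rfl, (ht i hi).le⟩, hmc _ ⟨(ht i hi).le, le_rfl⟩] at this
    nlinarith [ht i hi]
  refine ⟨m, hm, m * n + c - n, ?_⟩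
  have hmem : Icc (t i - n) (t (i + 1) - n) ∈ 𝓝[≥] p :=
    Icc_mem_nhdsGE_of_mem ⟨by linarith [hpi.1], by linarith [hpi.2]⟩
  filter_upwards [hmem] with x hx
  have := hmc (x + n) ⟨by linarith [hx.1], by linarith [hx.2]⟩
  rw [hF.map_add_int] at this
  linear_combination this

theorem hasDerivWithinAt (hF : IsPLCircleLift F) (p : ℝ) :
    HasDerivWithinAt F (derivWithin F (Ici p) p) (Ici p) p := by
  obtain ⟨m, -, c, h⟩ := hF.exists_eventuallyEq_affine p
  exact (hasDerivWithinAt_Ici_of_eventuallyEq h).differentiableWithinAt.hasDerivWithinAt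

theorem derivWithin_pos (hF : IsPLCircleLift F) (p : ℝ) : 0 < derivWithin F (Ici p) p := by
  obtain ⟨m, hm, c, h⟩ := hF.exists_eventuallyEq_affine p
  rwa [derivWithin_Ici_of_eventuallyEq h]

theorem derivWithin_add_int (hF : IsPLCircleLift F) (p : ℝ) (n : ℤ) :
    derivWithin F (Ici (p + n)) (p + n) = derivWithin F (Ici p) p := by
  have h := derivWithin_comp_add_const F (n : ℝ) (Ici p) p
  rw [← image_vadd] at h
  simp only [hF.map_add_int, derivWithin_add_const, vadd_eq_add, image_const_add_Ici] at h
  rw [h, add_comm]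

theorem derivWithin_comp (hF : IsPLCircleLift F) (hH : IsPLCircleLift H) (p : ℝ) :
    derivWithin (F ∘ H) (Ici p) p =
      derivWithin F (Ici (H p)) (H p) * derivWithin H (Ici p) p :=
  ((hF.hasDerivWithinAt (H p)).comp p (hH.hasDerivWithinAt p)
    fun _ hx => hH.1.monotone hx).derivWithin (uniqueDiffWithinAt_Ici p)

theorem add_int_mem_expandingFixedPoints (hF : IsPLCircleLift F) {p : ℝ}
    (hp : p ∈ expandingFixedPoints F) (n : ℤ) : p + n ∈ expandingFixedPoints F :=
  ⟨by rw [hF.map_add_int, hp.1], by rw [hF.derivWithin_add_int]; exact hp.2⟩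

theorem finite_coe_image_expandingFixedPoints (hF : IsPLCircleLift F) :
    (((↑) : ℝ → 𝕋) '' expandingFixedPoints F).Finite := by
  obtain ⟨k, t, -, htk, -, haff⟩ := hF.2.2
  have hpiece : ∀ i < k, (expandingFixedPoints F ∩ Ico (t i) (t (i + 1))).Subsingleton := by
    rintro i hi p ⟨hp, hpi⟩ q ⟨hq, hqi⟩
    obtain ⟨m, c, hmc⟩ := haff i hi
    have hslope : derivWithin F (Ici p) p = m := derivWithin_Ici_of_eventuallyEq
      (eventually_of_mem (Icc_mem_nhdsGE_of_mem hpi) fun x hx => hmc x hx)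
    have hm : 1 < m := hslope ▸ hp.2
    have hpq : (m - 1) * (p - q) = 0 := by
      linear_combination (hmc p (Ico_subset_Icc_self hpi)).symm.trans hp.1 -
        (hmc q (Ico_subset_Icc_self hqi)).symm.trans hq.1
    rcases mul_eq_zero.1 hpq with h | h
    · linarith
    · linarith
  have hfin : (expandingFixedPoints F ∩ Ico (t 0) (t 0 + 1)).Finite := by
    refine ((finite_lt_nat k).biUnion fun i hi => (hpiece i hi).finite).subset ?_
    rintro p ⟨hp, hpI⟩
    obtain ⟨i, hi, hpi⟩ := exists_lt_mem_Ico_of_mem_Ico t (by rwa [htk] : p ∈ Ico (t 0) (t k))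
    exact mem_biUnion hi ⟨hp, hpi⟩
  refine (hfin.image ((↑) : ℝ → 𝕋)).subset ?_
  rintro _ ⟨p, hp, rfl⟩
  obtain ⟨n, hn⟩ := exists_int_add_mem_Ico (t 0) p
  exact ⟨p + n, ⟨hF.add_int_mem_expandingFixedPoints hp n, hn⟩, by simp⟩

theorem mapsTo_expandingFixedPoints (hF : IsPLCircleLift F) (hH : IsPLCircleLift H)
    (hFH : Function.Commute F H) :
    MapsTo H (expandingFixedPoints F) (expandingFixedPoints F) := by
  rintro p ⟨hfix, hslope⟩
  refine ⟨by rw [hFH p, hfix], ?_⟩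
  have hchain := hF.derivWithin_comp hH p
  rw [Semiconj.comp_eq hFH, hH.derivWithin_comp hF p, hfix, mul_comm] at hchain
  rwa [← mul_right_cancel₀ (hH.derivWithin_pos p).ne' hchain]

theorem nonempty_expandingFixedPoints (hF : IsPLCircleLift F) {x₀ w : ℝ} (hx₀ : F x₀ = x₀)
    (hw : w < F w) : (expandingFixedPoints F).Nonempty := by
  set A := Iic w ∩ {v | F v = v}
  have hAbdd : BddAbove A := ⟨w, fun v hv => hv.1⟩
  have hpA : sSup A ∈ A := by
    refine (isClosed_Iic.inter (isClosed_eq hF.continuous continuous_id)).csSup_mem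
      ⟨x₀ + ⌊w - x₀⌋, ?_, ?_⟩ hAbdd
    · show x₀ + ⌊w - x₀⌋ ≤ w
      linarith [Int.floor_le (w - x₀)]
    · show F (x₀ + ⌊w - x₀⌋) = x₀ + ⌊w - x₀⌋
      rw [hF.map_add_int, hx₀]
  set p := sSup A
  have hpw : p < w := hpA.1.lt_of_ne fun h => hw.ne' (h ▸ hpA.2)
  have habove : ∀ u ∈ Ioc p w, u < F u := by
    intro u hu
    by_contra! hle
    obtain ⟨v, hv, hv0⟩ := intermediate_value_Icc hu.2
      (hF.continuous.sub continuous_id).continuousOn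
      (⟨sub_nonpos.2 hle, (sub_pos.2 hw).le⟩ : (0 : ℝ) ∈ Icc (F u - u) (F w - w))
    have : v ≤ p := le_csSup hAbdd ⟨hv.2, sub_eq_zero.1 hv0⟩
    linarith [hu.1, hv.1]
  obtain ⟨m, -, c, hmc⟩ := hF.exists_eventuallyEq_affine p
  refine ⟨p, hpA.2, ?_⟩
  rw [derivWithin_Ici_of_eventuallyEq hmc]
  have hp : F p = m * p + c := hmc.eq_of_nhdsWithin self_mem_Ici
  obtain ⟨u, hu, hpu⟩ := ((hmc.filter_mono (nhdsWithin_mono _ Ioi_subset_Ici_self)).and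
    (Ioc_mem_nhdsGT hpw)).exists
  have hu' : u < m * u + c := (habove u hpu).trans_eq hu
  have hFp : F p = p := hpA.2
  nlinarith [hpu.1]

end IsPLCircleLift

def HasPLLifts (G : Type*) [Group G] [MulAction G 𝕋] : Prop :=
  ∀ g : G, ∃ F, IsPLCircleLift F ∧ Semiconj ((↑) : ℝ → 𝕋) F (g • ·)

section RightSlope

variable {G : Type*} [Group G] [MulAction G 𝕋] (hPL : HasPLLifts G)

/-- The right derivative of a chosen PL lift of `g` at a chosen representative of `θ`;
by `rightSlope_coe` it depends on neither choice. -/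
noncomputable def rightSlope (g : G) (θ : 𝕋) : ℝ :=
  derivWithin (hPL g).choose (Ici (Quotient.out θ)) (Quotient.out θ)

theorem rightSlope_coe {g : G} {F : ℝ → ℝ} (hF : Continuous F)
    (hFg : Semiconj ((↑) : ℝ → 𝕋) F (g • ·)) (p : ℝ) :
    rightSlope hPL g p = derivWithin F (Ici p) p := by
  obtain ⟨hL, hLg⟩ := (hPL g).choose_spec
  obtain ⟨n, hn⟩ := exists_int_eq_add_of_coe_eq (QuotientAddGroup.out_eq' (p : 𝕋))
  rw [rightSlope, hn, hL.derivWithin_add_int,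
    derivWithin_eq_of_semiconj hL.continuous hF hLg hFg]

theorem rightSlope_mul (g h : G) (θ : 𝕋) :
    rightSlope hPL (g * h) θ = rightSlope hPL g (h • θ) * rightSlope hPL h θ := by
  induction θ using QuotientAddGroup.induction_on with | H p => ?_
  obtain ⟨F, hF, hFg⟩ := hPL g
  obtain ⟨H, hH, hHh⟩ := hPL h
  have hFH : Semiconj ((↑) : ℝ → 𝕋) (F ∘ H) ((g * h) • ·) := by
    simpa only [comp_def, mul_smul] using hFg.comp_right hHh
  have hHp : h • (p : 𝕋) = H p := (hHh p).symm
  rw [rightSlope_coe hPL (hF.continuous.comp hH.continuous) hFH, hHp,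
    rightSlope_coe hPL hF.continuous hFg, rightSlope_coe hPL hH.continuous hHh,
    hF.derivWithin_comp hH]

noncomputable def slopeProductHom (S : Finset 𝕋) (hS : ∀ g : G, ∀ θ ∈ S, g • θ ∈ S) :
    G →* ℝ where
  toFun g := ∏ θ ∈ S, rightSlope hPL g θ
  map_one' := Finset.prod_eq_one fun θ _ => by
    induction θ using QuotientAddGroup.induction_on with | H p => ?_
    rw [rightSlope_coe hPL continuous_id fun x => (one_smul G _).symm,
      derivWithin_id _ _ (uniqueDiffWithinAt_Ici p)]
  map_mul' g h := by
    simp_rw [rightSlope_mul, Finset.prod_mul_distrib]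
    congr 1
    exact Finset.prod_nbij' (h • ·) (h⁻¹ • ·) (fun θ hθ => hS h θ hθ)
      (fun θ hθ => hS h⁻¹ θ hθ) (fun θ _ => inv_smul_smul h θ) (fun θ _ => smul_inv_smul h θ)
      fun _ _ => rfl

end RightSlope

section PLAction

variable {G : Type*} [Group G] [MulAction G 𝕋]

theorem exists_monoidHom_one_lt_of_mem_center (hPL : HasPLLifts G) {z : G}
    (hz : z ∈ Subgroup.center G) {F : ℝ → ℝ} (hF : IsPLCircleLift F)
    (hFz : Semiconj ((↑) : ℝ → 𝕋) F (z • ·)) {x₀ w : ℝ} (hx₀ : F x₀ = x₀) (hw : w < F w) :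
    ∃ Φ : G →* ℝ, 1 < Φ z := by
  set S := hF.finite_coe_image_expandingFixedPoints.toFinset
  have hS : ∀ g : G, ∀ θ ∈ S, g • θ ∈ S := by
    simp only [S, Finite.mem_toFinset]
    rintro g _ ⟨p, hp, rfl⟩
    obtain ⟨H, hH, hHg⟩ := hPL g
    have hFH : Function.Commute F H := hF.toCircleDeg1Lift.commute_of_semiconj hF.continuous
      hH.continuous hFz hHg (fun θ => by simp only [← mul_smul, Subgroup.mem_center_iff.1 hz g])
      hx₀
    exact ⟨H p, hF.mapsTo_expandingFixedPoints hH hFH hp, hHg p⟩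
  refine ⟨slopeProductHom hPL S hS, ?_⟩
  obtain ⟨p, hp⟩ := hF.nonempty_expandingFixedPoints hx₀ hw
  calc (1 : ℝ) = ∏ _θ ∈ S, 1 := Finset.prod_const_one.symm
    _ < _ := Finset.prod_lt_prod_of_nonempty (fun _ _ => one_pos) (fun θ hθ => ?_)
        ⟨p, (Finite.mem_toFinset _).2 (mem_image_of_mem _ hp)⟩
  obtain ⟨q, hq, rfl⟩ := (Finite.mem_toFinset _).1 hθ
  rw [rightSlope_coe hPL hF.continuous hFz]
  exact hq.2

theorem exists_isPLCircleLift_apply_eq (hPL : HasPLLifts G) {g : G} {x₀ : ℝ}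
    (hx₀ : g • (x₀ : 𝕋) = x₀) :
    ∃ F, IsPLCircleLift F ∧ Semiconj ((↑) : ℝ → 𝕋) F (g • ·) ∧ F x₀ = x₀ := by
  obtain ⟨F, hF, hFg⟩ := hPL g
  obtain ⟨n, hn⟩ := exists_int_eq_add_of_coe_eq ((hFg x₀).trans hx₀)
  exact ⟨fun x => F x - n, hF.sub_int n, fun x => by simp [← hFg x], by simp [hn]⟩

theorem commutatorElement_smul_of_mem_center (hPL : HasPLLifts G) {x y : G}
    (hxy : ⁅x, y⁆ ∈ Subgroup.center G) (θ : 𝕋) : ⁅x, y⁆ • θ = θ := by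
  obtain ⟨x₀, hx₀⟩ : ∃ x₀ : ℝ, ⁅x, y⁆ • (x₀ : 𝕋) = x₀ := by
    obtain ⟨_, hFx, hx⟩ := hPL x
    obtain ⟨_, hFy, hy⟩ := hPL y
    obtain ⟨u, rfl⟩ := hFx.exists_unit
    obtain ⟨v, rfl⟩ := hFy.exists_unit
    exact exists_smul_eq_of_commutatorElement_mem_center (u := u) (v := v) hx hy hxy
  obtain ⟨F, hF, hFz, hFx₀⟩ := exists_isPLCircleLift_apply_eq hPL hx₀
  obtain ⟨F', hF', hF'z, hF'x₀⟩ := exists_isPLCircleLift_apply_eq hPL (g := ⁅y, x⁆)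
    (by rw [← commutatorElement_inv, inv_smul_eq_iff, hx₀])
  have hF'F : F' ∘ F = id := by
    refine (AddCircle.isCoveringMap_coe (1 : ℝ)).eq_of_comp_eq
      (hF'.continuous.comp hF.continuous) continuous_id (funext fun t => ?_) x₀
      (by simp [hFx₀, hF'x₀])
    calc ((F' (F t) : ℝ) : 𝕋) = ⁅x, y⁆⁻¹ • ⁅x, y⁆ • (t : 𝕋) := by
          rw [commutatorElement_inv]; exact (hF'z (F t)).trans (congrArg _ (hFz t))
      _ = t := inv_smul_smul _ _
  suffices hFid : ∀ t, F t = t by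
    induction θ using QuotientAddGroup.induction_on with
    | H t => exact (hFz t).symm.trans (by rw [hFid t])
  intro t
  by_contra hFt
  rcases lt_or_gt_of_ne hFt with hlt | hgt
  · have hyx : ⁅y, x⁆ ∈ Subgroup.center G := commutatorElement_inv x y ▸ inv_mem hxy
    obtain ⟨Φ, hΦ⟩ := exists_monoidHom_one_lt_of_mem_center hPL hyx hF' hF'z hF'x₀
      (w := F t) (by rwa [← comp_apply (f := F'), hF'F])
    exact hΦ.ne' (Φ.map_commutatorElement_eq_one y x)
  · obtain ⟨Φ, hΦ⟩ := exists_monoidHom_one_lt_of_mem_center hPL hxy hF hFz hFx₀ hgt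
    exact hΦ.ne' (Φ.map_commutatorElement_eq_one x y)

end PLAction

/-- Any nilpotent group of orientation-preserving piecewise linear
homeomorphisms of the circle `S¹ = ℝ/ℤ` is abelian.  The group is encoded as
an abstract nilpotent group `G` with a faithful action `ρ` on the circle such
that each `ρ g` admits a strictly increasing piecewise linear lift to `ℝ`
commuting with the unit translation. -/
theorem abelian_of_nilpotent_PL_homeos_circle
    {G : Type*} [Group G] [Group.IsNilpotent G]
    (ρ : G → AddCircle (1 : ℝ) → AddCircle (1 : ℝ))
    (hmul : ∀ g h : G, ρ (g * h) = ρ g ∘ ρ h)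
    (hone : ρ 1 = id)
    (hPL : ∀ g : G, ∃ F : ℝ → ℝ, IsPLCircleLift F ∧
      ∀ x : ℝ, ρ g (x : AddCircle (1 : ℝ)) = ((F x : ℝ) : AddCircle (1 : ℝ)))
    (hfaithful : ∀ g : G, ρ g = id → g = 1) :
    ∀ a b : G, a * b = b * a := by
  let _ : MulAction G 𝕋 :=
    { smul := ρ
      one_smul := fun θ => congrFun hone θ
      mul_smul := fun g h θ => congrFun (hmul g h) θ }
  have hPL' : HasPLLifts G := fun g => (hPL g).imp fun _ hF => ⟨hF.1, fun x => (hF.2 x).symm⟩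
  exact Group.IsNilpotent.mul_comm_of_forall_commutatorElement_mem_center fun x y hxy =>
    hfaithful _ (funext (commutatorElement_smul_of_mem_center hPL' hxy))
end

section
/- There exists a family of maps φ_{a,b} : [0,a] → [0,b], defined for all a, b ∈ (0,∞), such that each φ_{a,b} is an orientation-preserving C¹ diffeomorphism of [0,a] onto [0,b] and: (1) for all a, b, c ∈ (0,∞) and all x ∈ [0,a], φ_{b,c}(φ_{a,b}(x)) = φ_{a,c}(x); (2) for all a, b, the derivative of φ_{a,b} equals 1 at both endpoints 0 and a; (3) for every ε > 0 there exists δ > 0 such that for all a, b with |b/a − 1| < δ and all x ∈ [0,a], |φ'_{a,b}(x) − 1| < ε. -/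
/-!
The maps `x ↦ x / (1 + c x)` form a one-parameter group under composition (equivalently
`1 / x ↦ 1 / x + c`). On `[0, a/2]` take `φ a b` to be the member with `c = 2/b - 2/a`, i.e.
`1/φ(x) - 2/b = 1/x - 2/a`, which sends `a/2` to `b/2`; extend it to `[a/2, a]` by the
reflection `φ(a - x) = b - φ(x)`. The group law gives the cocycle identity, and the derivative
`(1 + (2/b - 2/a) min(x, a - x))⁻²` is continuous, equals `1` at both endpoints, and tends to `1`
uniformly as `b/a → 1` because `|(2/b - 2/a) min(x, a - x)| ≤ |a/b - 1|`.
-/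

open Set

noncomputable def mobius (c x : ℝ) : ℝ := x / (1 + c * x)

theorem mobius_mobius {p q u : ℝ} (hp : 1 + p * u ≠ 0) :
    mobius q (mobius p u) = mobius (p + q) u := by
  have hq : 1 + q * mobius p u = (1 + (p + q) * u) / (1 + p * u) := by
    rw [mobius, eq_div_iff hp, add_mul, mul_assoc, div_mul_cancel₀ _ hp]
    ring
  rw [mobius, hq, mobius, div_div_div_cancel_right₀ hp, mobius]

theorem hasDerivAt_mobius {c x : ℝ} (h : 1 + c * x ≠ 0) :
    HasDerivAt (mobius c) ((1 + c * x)⁻¹ ^ 2) x := by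
  refine ((hasDerivAt_id' x).div (((hasDerivAt_id' x).const_mul c).const_add 1) h).congr_deriv ?_
  field_simp
  ring

noncomputable def mobiusDiffeo (a b x : ℝ) : ℝ :=
  if x ≤ a / 2 then mobius (2 / b - 2 / a) x else b - mobius (2 / b - 2 / a) (a - x)

noncomputable def mobiusDiffeoDeriv (a b x : ℝ) : ℝ :=
  (1 + (2 / b - 2 / a) * min x (a - x))⁻¹ ^ 2

section

variable {a b x : ℝ}

theorem min_sub_mem_Icc (hx : x ∈ Icc 0 a) : min x (a - x) ∈ Icc 0 (a / 2) :=
  ⟨le_min hx.1 (sub_nonneg.2 hx.2), by linarith [min_le_left x (a - x), min_le_right x (a - x)]⟩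

theorem one_add_mul_pos (ha : 0 < a) (hb : 0 < b) (hx : x ∈ Icc 0 (a / 2)) :
    0 < 1 + (2 / b - 2 / a) * x := by
  have : 1 + (2 / b - 2 / a) * x = (a - 2 * x) / a + 2 * x / b := by field_simp; ring
  rw [this]
  rcases hx.1.eq_or_lt with rfl | hx₀
  · simp [ha.ne']
  · have : 0 ≤ (a - 2 * x) / a := div_nonneg (by linarith [hx.2]) ha.le
    positivity

theorem mobius_le_half (ha : 0 < a) (hb : 0 < b) (hx : x ∈ Icc 0 (a / 2)) :
    mobius (2 / b - 2 / a) x ≤ b / 2 := by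
  rw [mobius, div_le_iff₀ (one_add_mul_pos ha hb hx)]
  have : b / 2 * (1 + (2 / b - 2 / a) * x) - x = b * (a - 2 * x) / (2 * a) := by
    field_simp; ring
  have : 0 ≤ b * (a - 2 * x) / (2 * a) := by
    have : 0 ≤ a - 2 * x := by linarith [hx.2]
    positivity
  linarith

theorem mobius_half (ha : a ≠ 0) (hb : b ≠ 0) : mobius (2 / b - 2 / a) (a / 2) = b / 2 := by
  have : 1 + (2 / b - 2 / a) * (a / 2) = a / b := by field_simp; ring
  rw [mobius, this, div_div_eq_mul_div]
  field_simp

theorem mobiusDiffeo_of_le (hx : x ≤ a / 2) : mobiusDiffeo a b x = mobius (2 / b - 2 / a) x :=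
  if_pos hx

theorem mobiusDiffeo_sub (ha : a ≠ 0) (hb : b ≠ 0) (x : ℝ) :
    mobiusDiffeo a b (a - x) = b - mobiusDiffeo a b x := by
  unfold mobiusDiffeo
  rcases lt_trichotomy x (a / 2) with hx | rfl | hx
  · rw [if_neg (by linarith), if_pos hx.le, sub_sub_cancel]
  · rw [if_pos (by linarith), if_pos le_rfl, show a - a / 2 = a / 2 by ring, mobius_half ha hb]
    ring
  · rw [if_pos (by linarith), if_neg (by linarith)]
    ring

theorem mobiusDiffeo_eq_sub (ha : a ≠ 0) (hb : b ≠ 0) (x : ℝ) :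
    mobiusDiffeo a b x = b - mobiusDiffeo a b (a - x) := by
  rw [mobiusDiffeo_sub ha hb, sub_sub_cancel]

theorem mobiusDiffeo_zero (ha : 0 ≤ a) : mobiusDiffeo a b 0 = 0 := by
  rw [mobiusDiffeo_of_le (by linarith), mobius, zero_div]

theorem mobiusDiffeo_self (ha : 0 < a) (hb : b ≠ 0) : mobiusDiffeo a b a = b := by
  rw [mobiusDiffeo_eq_sub ha.ne' hb, sub_self, mobiusDiffeo_zero ha.le, sub_zero]

theorem mobiusDiffeo_mobiusDiffeo_of_mem {c : ℝ} (ha : 0 < a) (hb : 0 < b)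
    (hx : x ∈ Icc 0 (a / 2)) : mobiusDiffeo b c (mobiusDiffeo a b x) = mobiusDiffeo a c x := by
  have hle : mobiusDiffeo a b x ≤ b / 2 := by
    rw [mobiusDiffeo_of_le hx.2]
    exact mobius_le_half ha hb hx
  rw [mobiusDiffeo_of_le hle, mobiusDiffeo_of_le hx.2, mobiusDiffeo_of_le hx.2,
    mobius_mobius (one_add_mul_pos ha hb hx).ne']
  congr 1
  ring

theorem mobiusDiffeo_mobiusDiffeo {c : ℝ} (ha : 0 < a) (hb : 0 < b) (hc : c ≠ 0)
    (hx : x ∈ Icc 0 a) : mobiusDiffeo b c (mobiusDiffeo a b x) = mobiusDiffeo a c x := by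
  rcases le_or_gt x (a / 2) with h | h
  · exact mobiusDiffeo_mobiusDiffeo_of_mem ha hb ⟨hx.1, h⟩
  · rw [mobiusDiffeo_eq_sub ha.ne' hb.ne' x, mobiusDiffeo_sub hb.ne' hc,
      mobiusDiffeo_mobiusDiffeo_of_mem ha hb ⟨by linarith [hx.2], by linarith⟩,
      (mobiusDiffeo_eq_sub ha.ne' hc x).symm]

theorem one_add_mul_min_pos (ha : 0 < a) (hb : 0 < b) (hx : x ∈ Icc 0 a) :
    0 < 1 + (2 / b - 2 / a) * min x (a - x) :=
  one_add_mul_pos ha hb (min_sub_mem_Icc hx)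

theorem mobiusDiffeoDeriv_pos (ha : 0 < a) (hb : 0 < b) (hx : x ∈ Icc 0 a) :
    0 < mobiusDiffeoDeriv a b x := by
  have := one_add_mul_min_pos ha hb hx
  unfold mobiusDiffeoDeriv
  positivity

theorem hasDerivWithinAt_mobiusDiffeo (ha : 0 < a) (hb : 0 < b) (hx : x ∈ Icc 0 a) :
    HasDerivWithinAt (mobiusDiffeo a b) (mobiusDiffeoDeriv a b x) (Icc 0 a) x := by
  have hpos := one_add_mul_min_pos ha hb hx
  rw [mobiusDiffeoDeriv,
    ← Icc_union_Icc_eq_Icc (by linarith : 0 ≤ a / 2) (by linarith : a / 2 ≤ a)]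
  -- on a closed half not containing `x` every value is a derivative within it
  refine HasDerivWithinAt.union ?_ ?_
  · by_cases h : x ≤ a / 2
    · rw [min_eq_left (by linarith)] at hpos ⊢
      exact (hasDerivAt_mobius hpos.ne').hasDerivWithinAt.congr_of_mem
        (fun y hy => mobiusDiffeo_of_le hy.2) ⟨hx.1, h⟩
    · exact HasFDerivWithinAt.of_notMem_closure
        (by rw [isClosed_Icc.closure_eq]; exact fun hx' => h hx'.2)
  · by_cases h : a / 2 ≤ x
    · rw [min_eq_right (by linarith)] at hpos ⊢
      have hright : ∀ y ∈ Icc (a / 2) a,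
          mobiusDiffeo a b y = b - mobius (2 / b - 2 / a) (a - y) := fun y hy => by
        rw [mobiusDiffeo_eq_sub ha.ne' hb.ne', mobiusDiffeo_of_le (by linarith [hy.1])]
      exact ((((hasDerivAt_mobius hpos.ne').comp_const_sub a x).const_sub b).congr_deriv
        (neg_neg _)).hasDerivWithinAt.congr_of_mem hright ⟨h, hx.2⟩
    · exact HasFDerivWithinAt.of_notMem_closure
        (by rw [isClosed_Icc.closure_eq]; exact fun hx' => h hx'.1)

theorem derivWithin_mobiusDiffeo (ha : 0 < a) (hb : 0 < b) (hx : x ∈ Icc 0 a) :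
    derivWithin (mobiusDiffeo a b) (Icc 0 a) x = mobiusDiffeoDeriv a b x :=
  (hasDerivWithinAt_mobiusDiffeo ha hb hx).derivWithin (uniqueDiffOn_Icc ha x hx)

theorem continuousOn_mobiusDiffeoDeriv (ha : 0 < a) (hb : 0 < b) :
    ContinuousOn (mobiusDiffeoDeriv a b) (Icc 0 a) :=
  ((continuous_const.add (continuous_const.mul
    (continuous_id.min (continuous_const.sub continuous_id)))).continuousOn.inv₀
      fun _ hx => (one_add_mul_min_pos ha hb hx).ne').pow 2

theorem mobiusDiffeoDeriv_zero (ha : 0 ≤ a) : mobiusDiffeoDeriv a b 0 = 1 := by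
  simp [mobiusDiffeoDeriv, ha]

theorem mobiusDiffeoDeriv_self (ha : 0 ≤ a) : mobiusDiffeoDeriv a b a = 1 := by
  simp [mobiusDiffeoDeriv, ha]

theorem continuousOn_mobiusDiffeo (ha : 0 < a) (hb : 0 < b) :
    ContinuousOn (mobiusDiffeo a b) (Icc 0 a) :=
  fun _ hx => (hasDerivWithinAt_mobiusDiffeo ha hb hx).continuousWithinAt

theorem strictMonoOn_mobiusDiffeo (ha : 0 < a) (hb : 0 < b) :
    StrictMonoOn (mobiusDiffeo a b) (Icc 0 a) :=
  strictMonoOn_of_hasDerivWithinAt_pos (convex_Icc 0 a) (continuousOn_mobiusDiffeo ha hb)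
    (fun _ hx => (hasDerivWithinAt_mobiusDiffeo ha hb (interior_subset hx)).mono interior_subset)
    (fun _ hx => mobiusDiffeoDeriv_pos ha hb (interior_subset hx))

theorem image_mobiusDiffeo (ha : 0 < a) (hb : 0 < b) :
    mobiusDiffeo a b '' Icc 0 a = Icc 0 b := by
  rw [(continuousOn_mobiusDiffeo ha hb).image_Icc_of_monotoneOn ha.le
    (strictMonoOn_mobiusDiffeo ha hb).monotoneOn, mobiusDiffeo_zero ha.le,
    mobiusDiffeo_self ha hb.ne']

theorem contDiffOn_mobiusDiffeo (ha : 0 < a) (hb : 0 < b) :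
    ContDiffOn ℝ 1 (mobiusDiffeo a b) (Icc 0 a) :=
  (contDiffOn_one_iff_derivWithin (uniqueDiffOn_Icc ha)).2
    ⟨fun _ hx => (hasDerivWithinAt_mobiusDiffeo ha hb hx).differentiableWithinAt,
      (continuousOn_mobiusDiffeoDeriv ha hb).congr fun _ hx => derivWithin_mobiusDiffeo ha hb hx⟩

theorem abs_mul_le_abs_div_sub_one (ha : 0 < a) (hb : 0 < b) (hx : x ∈ Icc 0 (a / 2)) :
    |(2 / b - 2 / a) * x| ≤ |a / b - 1| := by
  have : a / b - 1 = (2 / b - 2 / a) * (a / 2) := by field_simp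
  rw [this, abs_mul, abs_mul, abs_of_nonneg hx.1, abs_of_pos (half_pos ha)]
  gcongr
  exact hx.2

end

theorem exists_forall_abs_mobiusDiffeoDeriv_sub_one_lt {ε : ℝ} (hε : 0 < ε) :
    ∃ δ : ℝ, 0 < δ ∧ ∀ a b : ℝ, 0 < a → 0 < b → |b / a - 1| < δ →
      ∀ x ∈ Icc (0 : ℝ) a, |mobiusDiffeoDeriv a b x - 1| < ε := by
  obtain ⟨η, hη, hg⟩ := Metric.continuousAt_iff.1
    (show ContinuousAt (fun t : ℝ => (1 + t)⁻¹ ^ 2) 0 by fun_prop (disch := norm_num)) ε hε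
  obtain ⟨δ, hδ, hinv⟩ :=
    Metric.continuousAt_iff.1 (continuousAt_inv₀ (one_ne_zero : (1 : ℝ) ≠ 0)) η hη
  refine ⟨δ, hδ, fun a b ha hb hab x hx => ?_⟩
  have hba : |a / b - 1| < η := by
    simpa [Real.dist_eq, inv_div] using hinv (x := b / a) (by simpa [Real.dist_eq] using hab)
  have hm := abs_mul_le_abs_div_sub_one ha hb (min_sub_mem_Icc hx)
  simpa [Real.dist_eq, mobiusDiffeoDeriv] using hg (x := (2 / b - 2 / a) * min x (a - x))
    (by simpa [Real.dist_eq] using hm.trans_lt hba)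

/-- There exists a family of maps `φ a b : [0,a] → [0,b]`, for `a, b ∈ (0,∞)`,
each an orientation-preserving `C¹` diffeomorphism of `[0,a]` onto `[0,b]`
(strictly increasing `C¹` bijection with positive derivative), satisfying:
(1) the cocycle identity `φ b c (φ a b x) = φ a c x`;
(2) the derivative of `φ a b` equals `1` at both endpoints `0` and `a`;
(3) for every `ε > 0` there is `δ > 0` such that if `|b/a − 1| < δ` then
`|(φ a b)'(x) − 1| < ε` for all `x ∈ [0,a]`. -/
theorem exists_compatible_C1_interval_diffeo_family :
    ∃ φ : ℝ → ℝ → ℝ → ℝ,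
      (∀ a b : ℝ, 0 < a → 0 < b →
        StrictMonoOn (φ a b) (Icc 0 a) ∧
        φ a b '' Icc 0 a = Icc 0 b ∧
        ContDiffOn ℝ 1 (φ a b) (Icc 0 a) ∧
        (∀ x ∈ Icc (0:ℝ) a, 0 < derivWithin (φ a b) (Icc 0 a) x)) ∧
      (∀ a b c : ℝ, 0 < a → 0 < b → 0 < c →
        ∀ x ∈ Icc (0:ℝ) a, φ b c (φ a b x) = φ a c x) ∧
      (∀ a b : ℝ, 0 < a → 0 < b →
        derivWithin (φ a b) (Icc 0 a) 0 = 1 ∧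
        derivWithin (φ a b) (Icc 0 a) a = 1) ∧
      (∀ ε : ℝ, 0 < ε → ∃ δ : ℝ, 0 < δ ∧
        ∀ a b : ℝ, 0 < a → 0 < b → |b / a - 1| < δ →
          ∀ x ∈ Icc (0:ℝ) a, |derivWithin (φ a b) (Icc 0 a) x - 1| < ε) := by
  refine ⟨mobiusDiffeo, fun a b ha hb => ⟨strictMonoOn_mobiusDiffeo ha hb,
      image_mobiusDiffeo ha hb, contDiffOn_mobiusDiffeo ha hb, fun x hx => ?_⟩,
    fun a b c ha hb hc x hx => mobiusDiffeo_mobiusDiffeo ha hb hc.ne' hx,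
    fun a b ha hb => ?_, fun ε hε => ?_⟩
  · rw [derivWithin_mobiusDiffeo ha hb hx]
    exact mobiusDiffeoDeriv_pos ha hb hx
  · rw [derivWithin_mobiusDiffeo ha hb (left_mem_Icc.2 ha.le),
      derivWithin_mobiusDiffeo ha hb (right_mem_Icc.2 ha.le)]
    exact ⟨mobiusDiffeoDeriv_zero ha.le, mobiusDiffeoDeriv_self ha.le⟩
  · obtain ⟨δ, hδ, hderiv⟩ := exists_forall_abs_mobiusDiffeoDeriv_sub_one_lt hε
    refine ⟨δ, hδ, fun a b ha hb hab x hx => ?_⟩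
    rw [derivWithin_mobiusDiffeo ha hb hx]
    exact hderiv a b ha hb hab x hx
end

section
/- Let n be a positive even integer. Then: (1) for every K > 0, the quantity |(x + y)ⁿ − yⁿ| / (x^{n+2} + yⁿ + K) tends to 0 as ‖(x,y)‖ → ∞ in ℝ²; moreover (2) for every ε > 0 there exists K₀ > 0 such that for all K ≥ K₀ and all (x,y) ∈ ℝ², |(x + y)ⁿ − yⁿ| / (x^{n+2} + yⁿ + K) < ε. -/
open Finset

lemma aux_abs_pow_sub_pow_le (a b : ℝ) (n : ℕ) :
    |a ^ n - b ^ n| ≤ n * (|a| + |b|) ^ (n - 1) * |a - b| := by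
  rw [← geom_sum₂_mul a b n, abs_mul]
  apply mul_le_mul_of_nonneg_right _ (abs_nonneg _)
  calc |∑ i ∈ range n, a ^ i * b ^ (n - 1 - i)|
      ≤ ∑ i ∈ range n, |a ^ i * b ^ (n - 1 - i)| := Finset.abs_sum_le_sum_abs _ _
    _ ≤ ∑ i ∈ range n, (|a| + |b|) ^ (n - 1) := by
        apply Finset.sum_le_sum
        intro i hi
        rw [abs_mul, abs_pow, abs_pow]
        have hi' : i ≤ n - 1 := Nat.le_sub_one_of_lt (Finset.mem_range.mp hi)
        calc |a| ^ i * |b| ^ (n - 1 - i)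
            ≤ (|a| + |b|) ^ i * (|a| + |b|) ^ (n - 1 - i) :=
              mul_le_mul
                (pow_le_pow_left₀ (abs_nonneg _) (le_add_of_nonneg_right (abs_nonneg b)) i)
                (pow_le_pow_left₀ (abs_nonneg _) (le_add_of_nonneg_left (abs_nonneg a)) _)
                (by positivity) (by positivity)
          _ = (|a| + |b|) ^ (n - 1) := by
              rw [← pow_add, Nat.add_sub_cancel' hi']
    _ = n * (|a| + |b|) ^ (n - 1) := by simp [mul_comm]

lemma aux_young (w z t : ℝ) (hw : 0 ≤ w) (hz : 0 ≤ z) (ht : 0 < t) (m : ℕ) :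
    w * z ^ m ≤ t * z ^ (m + 1) + w ^ (m + 1) / t ^ m := by
  rcases le_total w (t * z) with h | h
  · have h1 : w * z ^ m ≤ t * z ^ (m + 1) := by
      calc w * z ^ m ≤ t * z * z ^ m :=
            mul_le_mul_of_nonneg_right h (by positivity)
        _ = t * z ^ (m + 1) := by ring
    have h2 : (0:ℝ) ≤ w ^ (m + 1) / t ^ m := by positivity
    linarith
  · have hzw : z ≤ w / t := (le_div_iff₀ ht).mpr (by linarith [mul_comm t z])
    have h1 : w * z ^ m ≤ w ^ (m + 1) / t ^ m := by
      calc w * z ^ m ≤ w * (w / t) ^ m :=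
            mul_le_mul_of_nonneg_left (pow_le_pow_left₀ hz hzw m) hw
        _ = w ^ (m + 1) / t ^ m := by rw [div_pow]; ring
    have h2 : (0:ℝ) ≤ t * z ^ (m + 1) := by positivity
    linarith

lemma aux_pow_absorb (w A : ℝ) (hw : 0 ≤ w) (hA : 0 < A) (n : ℕ) :
    w ^ n ≤ w ^ (n + 2) / A ^ 2 + A ^ n := by
  rcases le_total w A with h | h
  · have h1 : w ^ n ≤ A ^ n := pow_le_pow_left₀ hw h n
    have h2 : (0:ℝ) ≤ w ^ (n + 2) / A ^ 2 := by positivity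
    linarith
  · have hw' : 0 < w := lt_of_lt_of_le hA h
    have h1 : w ^ n ≤ w ^ (n + 2) / A ^ 2 := by
      rw [le_div_iff₀ (by positivity)]
      calc w ^ n * A ^ 2 ≤ w ^ n * w ^ 2 :=
            mul_le_mul_of_nonneg_left (pow_le_pow_left₀ hA.le h 2) (by positivity)
        _ = w ^ (n + 2) := by ring
    have h2 : (0:ℝ) ≤ A ^ n := by positivity
    linarith

lemma aux_three (x y : ℝ) (n : ℕ) :
    (|x| + 2 * |y|) ^ n ≤ 3 ^ n * (|x| ^ n + |y| ^ n) := by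
  rcases le_total |x| |y| with h | h
  · have h1 : (|x| + 2 * |y|) ^ n ≤ (3 * |y|) ^ n :=
      pow_le_pow_left₀ (by positivity) (by linarith) n
    have h2 : (0:ℝ) ≤ |x| ^ n := by positivity
    calc (|x| + 2 * |y|) ^ n ≤ (3 * |y|) ^ n := h1
      _ = 3 ^ n * |y| ^ n := mul_pow 3 |y| n
      _ ≤ 3 ^ n * (|x| ^ n + |y| ^ n) := by nlinarith [pow_pos (show (0:ℝ) < 3 by norm_num) n]
  · have h1 : (|x| + 2 * |y|) ^ n ≤ (3 * |x|) ^ n :=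
      pow_le_pow_left₀ (by positivity) (by linarith) n
    have h2 : (0:ℝ) ≤ |y| ^ n := by positivity
    calc (|x| + 2 * |y|) ^ n ≤ (3 * |x|) ^ n := h1
      _ = 3 ^ n * |x| ^ n := mul_pow 3 |x| n
      _ ≤ 3 ^ n * (|x| ^ n + |y| ^ n) := by nlinarith [pow_pos (show (0:ℝ) < 3 by norm_num) n]

/-- Key estimate: the numerator is `≤ ε * (x^(n+2) + y^n) + M`. -/
lemma aux_key (n : ℕ) (hn : 0 < n) (hne : Even n) {ε : ℝ} (hε : 0 < ε) :
    ∃ M : ℝ, 0 < M ∧ ∀ x y : ℝ,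
      |(x + y) ^ n - y ^ n| ≤ ε * (x ^ (n + 2) + y ^ n) + M := by
  set t : ℝ := ε / 3 ^ n with ht_def
  have ht : 0 < t := by positivity
  have ht3 : t * 3 ^ n = ε := by rw [ht_def]; field_simp
  set C : ℝ := ε + (n : ℝ) ^ n / t ^ (n - 1) with hC_def
  have hC : 0 < C := by positivity
  set A : ℝ := Real.sqrt (C / ε) with hA_def
  have hA : 0 < A := Real.sqrt_pos.mpr (by positivity)
  have hA2 : A ^ 2 = C / ε := Real.sq_sqrt (by positivity)
  refine ⟨C * A ^ n + 1, by positivity, fun x y => ?_⟩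
  have hxa : (0:ℝ) ≤ |x| := abs_nonneg x
  have hya : (0:ℝ) ≤ |y| := abs_nonneg y
  have hm : n - 1 + 1 = n := Nat.succ_pred_eq_of_pos hn
  set z : ℝ := |x| + 2 * |y| with hz_def
  have hz : 0 ≤ z := by positivity
  -- step 1: numerator ≤ n|x| z^{n-1}
  have h1 : |(x + y) ^ n - y ^ n| ≤ (n : ℝ) * |x| * z ^ (n - 1) := by
    have h0 := aux_abs_pow_sub_pow_le (x + y) y n
    have hxy : |x + y - y| = |x| := by rw [add_sub_cancel_right]
    rw [hxy] at h0
    have habs : |x + y| + |y| ≤ z := by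
      have := abs_add_le x y; rw [hz_def]; linarith
    calc |(x + y) ^ n - y ^ n| ≤ n * (|x + y| + |y|) ^ (n - 1) * |x| := h0
      _ ≤ (n : ℝ) * z ^ (n - 1) * |x| := by
          apply mul_le_mul_of_nonneg_right _ hxa
          exact mul_le_mul_of_nonneg_left
            (pow_le_pow_left₀ (by positivity) habs _) (by positivity)
      _ = (n : ℝ) * |x| * z ^ (n - 1) := by ring
  -- step 2: Young
  have h2 : (n : ℝ) * |x| * z ^ (n - 1) ≤
      t * z ^ n + (n : ℝ) ^ n * |x| ^ n / t ^ (n - 1) := by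
    have := aux_young ((n : ℝ) * |x|) z t (by positivity) hz ht (n - 1)
    rw [hm, mul_pow] at this
    exact this
  -- step 3: z^n bound
  have h3 : t * z ^ n ≤ ε * |x| ^ n + ε * |y| ^ n := by
    have := aux_three x y n
    calc t * z ^ n ≤ t * (3 ^ n * (|x| ^ n + |y| ^ n)) :=
          mul_le_mul_of_nonneg_left this ht.le
      _ = ε * |x| ^ n + ε * |y| ^ n := by rw [← ht3]; ring
  -- step 4: absorb |x|^n
  have h4 : C * |x| ^ n ≤ ε * |x| ^ (n + 2) + C * A ^ n := by
    have := aux_pow_absorb |x| A hxa hA n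
    have hCA : C / A ^ 2 = ε := by rw [hA2]; field_simp
    calc C * |x| ^ n ≤ C * (|x| ^ (n + 2) / A ^ 2 + A ^ n) :=
          mul_le_mul_of_nonneg_left this hC.le
      _ = (C / A ^ 2) * |x| ^ (n + 2) + C * A ^ n := by ring
      _ = ε * |x| ^ (n + 2) + C * A ^ n := by rw [hCA]
  have hxe : |x| ^ (n + 2) = x ^ (n + 2) := (hne.add (even_two)).pow_abs x
  have hye : |y| ^ n = y ^ n := hne.pow_abs y
  have hcomb : ε * |x| ^ n + (n : ℝ) ^ n * |x| ^ n / t ^ (n - 1) = C * |x| ^ n := by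
    rw [hC_def]; field_simp
  rw [hxe] at h4
  rw [hye] at h3
  clear_value t C A z
  linarith [h1, h2, h3, h4, hcomb]

/-- Let `n` be a positive even integer.  Then (1) for every `K > 0`, the
quantity `|(x + y)^n − y^n| / (x^(n+2) + y^n + K)` tends to `0` as
`‖(x,y)‖ → ∞` in `ℝ²` (i.e. along the cocompact filter); moreover (2) for
every `ε > 0` there is `K₀ > 0` such that for all `K ≥ K₀` the quantity is
`< ε` for all `(x, y) ∈ ℝ²`. -/
theorem ratio_tendsto_zero_and_uniformly_small
    (n : ℕ) (hn : 0 < n) (hne : Even n) :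
    (∀ K : ℝ, 0 < K →
      Filter.Tendsto
        (fun p : ℝ × ℝ => |(p.1 + p.2) ^ n - p.2 ^ n| / (p.1 ^ (n + 2) + p.2 ^ n + K))
        (Filter.cocompact (ℝ × ℝ)) (nhds 0)) ∧
    (∀ ε : ℝ, 0 < ε → ∃ K₀ : ℝ, 0 < K₀ ∧ ∀ K : ℝ, K₀ ≤ K →
      ∀ x y : ℝ, |(x + y) ^ n - y ^ n| / (x ^ (n + 2) + y ^ n + K) < ε) := by
  have hne2 : Even (n + 2) := hne.add even_two
  constructor
  · intro K hK
    rw [Metric.tendsto_nhds]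
    intro ε hε
    obtain ⟨M, hM, hbound⟩ := aux_key n hn hne (half_pos hε)
    set R : ℝ := max 1 (2 * M / ε) with hR_def
    have hR1 : (1:ℝ) ≤ R := le_max_left _ _
    have hRM : 2 * M / ε ≤ R := le_max_right _ _
    have hnorm := (tendsto_norm_cocompact_atTop (E := ℝ × ℝ)).eventually_ge_atTop R
    filter_upwards [hnorm] with p hp
    obtain ⟨x, y⟩ := p
    simp only [Prod.norm_def, le_max_iff] at hp
    have hxp : (0:ℝ) ≤ x ^ (n + 2) := hne2.pow_nonneg x
    have hyp : (0:ℝ) ≤ y ^ n := hne.pow_nonneg y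
    have hden : 0 < x ^ (n + 2) + y ^ n + K := by linarith
    have hS : R ≤ x ^ (n + 2) + y ^ n := by
      rcases hp with hx | hy
      · have h1 : R ^ (n + 2) ≤ |x| ^ (n + 2) :=
          pow_le_pow_left₀ (by linarith) hx _
        have h2 : R ≤ R ^ (n + 2) := by
          calc R = R ^ 1 := (pow_one R).symm
            _ ≤ R ^ (n + 2) := pow_le_pow_right₀ hR1 (by omega)
        rw [hne2.pow_abs] at h1
        linarith
      · have h1 : R ^ n ≤ |y| ^ n := pow_le_pow_left₀ (by linarith) hy _
        have h2 : R ≤ R ^ n := by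
          calc R = R ^ 1 := (pow_one R).symm
            _ ≤ R ^ n := pow_le_pow_right₀ hR1 hn
        rw [hne.pow_abs] at h1
        linarith
    have hnum := hbound x y
    have hlt : |(x + y) ^ n - y ^ n| < ε * (x ^ (n + 2) + y ^ n + K) := by
      have hRM' : M ≤ ε / 2 * R := by
        rw [div_le_iff₀ hε] at hRM; linarith
      nlinarith [mul_pos hε hK, hS]
    simp only [Real.dist_eq, sub_zero]
    rw [abs_of_nonneg (div_nonneg (abs_nonneg _) hden.le)]
    exact (div_lt_iff₀ hden).mpr (by linarith [hlt])
  · intro ε hε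
    obtain ⟨M, hM, hbound⟩ := aux_key n hn hne (half_pos hε)
    refine ⟨2 * M / ε + 1, by positivity, fun K hK x y => ?_⟩
    have hKpos : 0 < K := lt_of_lt_of_le (by positivity) hK
    have hxp : (0:ℝ) ≤ x ^ (n + 2) := hne2.pow_nonneg x
    have hyp : (0:ℝ) ≤ y ^ n := hne.pow_nonneg y
    have hden : 0 < x ^ (n + 2) + y ^ n + K := by linarith
    have hnum := hbound x y
    rw [div_lt_iff₀ hden]
    have hεK : M < ε * K := by
      have : 2 * M / ε + 1 ≤ K := hK
      rw [div_add' _ _ _ (ne_of_gt hε), div_le_iff₀ hε] at this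
      nlinarith
    nlinarith
end
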